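/- arXiv:1601.02212 — 11 statements merged into one kernel-verified Lean document; each statement's English description precedes it below -/
import Mathlib

section
/- If operators D and U satisfy DU - qUD = I, then the operators F = D(U+I) and E = D(U+I)U satisfy FE - qEF = F + E. -/
/-- If operators `D` and `U` satisfy `DU - qUD = I`, then `F = D(U+I)` and
`E = D(U+I)U` satisfy `FE - qEF = F + E`. Here `A` is an algebra over a
commutative ring `R` containing the parameter `q`. -/
theorem pasep_matrix_ansatz_from_q_commutation
    {R A : Type*} [CommRing R] [Ring A] [Algebra R A] (q : R) (D U : A)
    (h : D * U - q • (U * D) = 1) :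
    (D * (U + 1)) * (D * (U + 1) * U) - q • ((D * (U + 1) * U) * (D * (U + 1)))
      = D * (U + 1) + D * (U + 1) * U := by
  linear_combination (norm :=
      (simp only [mul_add, add_mul, mul_sub, sub_mul, smul_add, smul_sub, smul_smul,
        mul_smul_comm, smul_mul_assoc, mul_one, one_mul, mul_assoc]; module))
    h * (D * U * U) + h * (D * U) + D * h * U + D * h
    - q • (h * (U * D * U)) - q • (h * (U * D))
    + q • (U * D * h * U) + q • (U * D * h)
end

section
/- If operators D and U satisfy DU - UD = I, then F = D(U+I) and E = D(U+I)U satisfy FE - EF = F + E. -/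
/-- If operators `D` and `U` satisfy `DU - UD = I`, then `F = D(U+I)` and
`E = D(U+I)U` satisfy `FE - EF = F + E`. -/
theorem pasep_matrix_ansatz_from_commutation
    {A : Type*} [Ring A] (D U : A) (h : D * U - U * D = 1) :
    (D * (U + 1)) * (D * (U + 1) * U) - (D * (U + 1) * U) * (D * (U + 1))
      = D * (U + 1) + D * (U + 1) * U := by
  set F := D * (U + 1) with hF
  have key : F * U - U * F = U + 1 := by
    calc F * U - U * F = (D * U - U * D) * U + (D * U - U * D) := by
          rw [hF]; noncomm_ring
      _ = U + 1 := by rw [h]; noncomm_ring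
  calc F * (F * U) - (F * U) * F = F * (F * U - U * F) := by noncomm_ring
    _ = F * (U + 1) := by rw [key]
    _ = F + F * U := by noncomm_ring
end

section
/- Let R be a rook placement of size n in the double staircase 2δ_n. Define a lattice path d(R) of length 2n+2 whose first step is up, last step is down, and for 2 ≤ i ≤ 2n+1 the i-th step is up if the (i-1)-st column of R contains a dot and down otherwise. Then d(R) is a Dyck path, i.e., every prefix has at least as many up steps as down steps and the total numbers of up and down steps are equal. -/
/-- Let `R` be a rook placement of size `n` in the double staircase `2δ_n`,
encoded as an injective function `f` assigning to each row (numbered from the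
top, row `i` having length `2(i+1)`) the column of its dot.  The associated
path `d(R)` of length `2n+2` has first step up, last step down, and for
`2 ≤ i ≤ 2n+1` the `i`-th step is up iff the `(i-1)`-st column contains a dot.
Then `d(R)` is a Dyck path: every prefix sum of the `±1` steps is nonnegative,
and the total sum is `0`. -/
theorem rook_placement_path_is_dyck (n : ℕ) (f : Fin n → Fin (2 * n))
    (hinj : Function.Injective f)
    (hrow : ∀ i : Fin n, (f i : ℕ) < 2 * ((i : ℕ) + 1)) :
    (∀ m ≤ 2 * n + 2,
      0 ≤ ∑ j ∈ Finset.range m,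
        (if j = 0 then (1 : ℤ)
         else if j = 2 * n + 1 then -1
         else if ∃ i : Fin n, (f i : ℕ) = j - 1 then 1 else -1)) ∧
    (∑ j ∈ Finset.range (2 * n + 2),
        (if j = 0 then (1 : ℤ)
         else if j = 2 * n + 1 then -1
         else if ∃ i : Fin n, (f i : ℕ) = j - 1 then 1 else -1)) = 0 := by
  classical
  set g : ℕ → ℤ := fun j =>
    if j = 0 then (1 : ℤ)
    else if j = 2 * n + 1 then -1
    else if ∃ i : Fin n, (f i : ℕ) = j - 1 then 1 else -1 with hg
  set S : ℕ → ℕ := fun k => (Finset.univ.filter fun i : Fin n => (f i : ℕ) < k).card with hS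
  -- step relation for S
  have hSstep : ∀ k, S (k + 1) = S k + (if ∃ i : Fin n, (f i : ℕ) = k then 1 else 0) := by
    intro k
    simp only [hS]
    split_ifs with h
    · obtain ⟨i₀, hi₀⟩ := h
      have heq : (Finset.univ.filter fun i : Fin n => (f i : ℕ) < k + 1)
          = insert i₀ (Finset.univ.filter fun i : Fin n => (f i : ℕ) < k) := by
        ext i
        simp only [Finset.mem_insert, Finset.mem_filter, Finset.mem_univ, true_and]
        constructor
        · intro hlt
          rcases Nat.lt_succ_iff_lt_or_eq.mp hlt with h' | h'
          · exact Or.inr h'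
          · exact Or.inl (hinj (Fin.ext (by omega)))
        · rintro (rfl | h')
          · omega
          · omega
      rw [heq, Finset.card_insert_of_notMem (by simp [hi₀])]
    · have heq : (Finset.univ.filter fun i : Fin n => (f i : ℕ) < k + 1)
          = (Finset.univ.filter fun i : Fin n => (f i : ℕ) < k) := by
        ext i
        simp only [Finset.mem_filter, Finset.mem_univ, true_and]
        constructor
        · intro hlt
          rcases Nat.lt_succ_iff_lt_or_eq.mp hlt with h' | h'
          · exact h'
          · exact absurd ⟨i, h'⟩ h
        · omega
      rw [heq]; omega
  -- lower bound on S
  have hSlow : ∀ k ≤ 2 * n, k / 2 ≤ S k := by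
    intro k hk
    have hlt : ∀ m ∈ Finset.range (k / 2), m < n := by
      intro m hm
      have := Finset.mem_range.mp hm
      omega
    have hcard : ((Finset.range (k / 2)).attachFin hlt).card = k / 2 := by
      rw [Finset.card_attachFin, Finset.card_range]
    have hsub : (Finset.range (k / 2)).attachFin hlt
        ⊆ Finset.univ.filter fun i : Fin n => (f i : ℕ) < k := by
      intro i hi
      rw [Finset.mem_attachFin, Finset.mem_range] at hi
      simp only [Finset.mem_filter, Finset.mem_univ, true_and]
      have := hrow i
      omega
    calc k / 2 = ((Finset.range (k / 2)).attachFin hlt).card := hcard.symm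
      _ ≤ S k := Finset.card_le_card hsub
  -- top value of S
  have hStop : S (2 * n) = n := by
    have heq : (Finset.univ.filter fun i : Fin n => (f i : ℕ) < 2 * n)
        = Finset.univ := by
      ext i
      simp only [Finset.mem_filter, Finset.mem_univ, true_and, iff_true]
      have h1 := hrow i
      have h2 := i.isLt
      omega
    simp [hS, heq]
  -- key prefix sum formula
  have hkey : ∀ k ≤ 2 * n, (∑ j ∈ Finset.range (k + 1), g j) = 2 * (S k : ℤ) - k + 1 := by
    intro k hk
    induction k with
    | zero =>
      have : S 0 = 0 := by
        simp [hS]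
      simp [this, hg]
    | succ k ih =>
      have hk' : k ≤ 2 * n := by omega
      rw [Finset.sum_range_succ, ih hk']
      have hgval : g (k + 1) = if ∃ i : Fin n, (f i : ℕ) = k then 1 else -1 := by
        simp only [hg]
        rw [if_neg (by omega), if_neg (by omega)]
        simp
      rw [hgval, hSstep k]
      split_ifs with h <;> push_cast <;> ring
  have hfull : (∑ j ∈ Finset.range (2 * n + 2), g j) = 0 := by
    have h1 : (∑ j ∈ Finset.range (2 * n + 1), g j) = 2 * (S (2 * n) : ℤ) - (2 * n) + 1 :=
      hkey (2 * n) le_rfl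
    rw [Finset.sum_range_succ, h1, hStop]
    have : g (2 * n + 1) = -1 := by simp [hg]
    rw [this]; ring
  refine ⟨?_, hfull⟩
  intro m hm
  match m, hm with
  | 0, _ => simp
  | (k + 1), hm =>
    rcases Nat.lt_or_ge k (2 * n + 1) with hlt | hge
    · have hk : k ≤ 2 * n := by omega
      rw [hkey k hk]
      have h1 := hSlow k hk
      have h2 : 2 * (k / 2) + 1 ≥ k := by omega
      have : (k : ℤ) ≤ 2 * (S k : ℤ) + 1 := by
        have : k ≤ 2 * S k + 1 := by omega
        exact_mod_cast this
      omega
    · have : k = 2 * n + 1 := by omega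
      subst this
      rw [hfull]
end

section
/- Let D be a Dyck word of length 2n (a word over {U, D-step} with nonnegative partial sums, ending at 0). The Dyck words E of length 2n+2 obtained from the word D·d·d (appending two down steps) by changing exactly one down step other than the last one into an up step are exactly n+1 in number. -/
/-!
Flipping the `k`-th step (`k ≤ 2n`) of `D ↘ ↘` from down to up always yields a Dyck word:
a prefix ending before position `k` is a prefix of `D`, and a longer prefix ends two units
higher than the corresponding prefix of `D ↘ ↘`, whose height is at least `-2`. Distinct
positions give distinct words, so the ribbon successors are counted by the down steps of
`D ↘`, of which there are `n + 1`.
-/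

/-- A Dyck word: every prefix has at least as many up steps (`true`) as down
steps (`false`), and the total numbers of up and down steps are equal. -/
def IsDyck (w : List Bool) : Prop :=
  (∀ p : ℕ, (w.take p).count false ≤ (w.take p).count true) ∧
    w.count false = w.count true

/-- Ribbon addition: `E` is obtained from `D ++ [false, false]` by changing a
single down step, other than the last one, into an up step. -/
def Ribbon (D E : List Bool) : Prop :=
  ∃ k, k < D.length + 1 ∧ (D ++ [false, false])[k]? = some false ∧
    E = (D ++ [false, false]).set k true

namespace List

variable {α : Type*}

theorem ncard_setOf_getElem?_eq [DecidableEq α] (l : List α) (a : α) :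
    {k : ℕ | l[k]? = some a}.ncard = l.count a := by
  have hidx : {k : ℕ | l[k]? = some a} = ↑(l.findIdxs (· == a)).toFinset := by
    ext k
    simp [getElem?_eq_some_iff]
  rw [hidx, Set.ncard_coe_finset, toFinset_card_of_nodup nodup_findIdxs, length_findIdxs,
    count_eq_countP]

theorem injOn_set_setOf_getElem?_eq {l : List α} {a b : α} (hab : a ≠ b) :
    Set.InjOn (fun k => l.set k b) {k : ℕ | l[k]? = some a} := by
  intro i hi j _ hij
  by_contra hne
  have hi_len : i < l.length := (getElem?_eq_some_iff.mp hi).1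
  have : (l.set j b)[i]? = some b := by
    rw [← show l.set i b = l.set j b from hij, getElem?_set_self hi_len]
  rw [getElem?_set_ne (Ne.symm hne)] at this
  exact hab (Option.some_injective _ (hi.symm.trans this))

theorem count_set_true_of_getElem?_eq_false {l : List Bool} {k : ℕ} (h : l[k]? = some false) :
    (l.set k true).count false + 1 = l.count false ∧
      (l.set k true).count true = l.count true + 1 := by
  obtain ⟨hk, hlk⟩ := getElem?_eq_some_iff.mp h
  have hpos : 0 < l.count false := count_pos_iff.mpr (hlk ▸ getElem_mem hk)
  simp [count_set hk, hlk]
  omega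

end List

theorem IsDyck.count_false_take_append_le {D : List Bool} (hD : IsDyck D) (s : List Bool)
    (p : ℕ) : ((D ++ s).take p).count false ≤ ((D ++ s).take p).count true + s.length := by
  have hs : (s.take (p - D.length)).count false ≤ s.length :=
    List.count_le_length.trans (List.length_take_le' _ _)
  simp only [List.take_append, List.count_append]
  have := hD.1 p
  omega

theorem IsDyck.of_ribbon {D E : List Bool} (hD : IsDyck D) (hE : Ribbon D E) : IsDyck E := by
  obtain ⟨k, hk, hdown, rfl⟩ := hE
  refine ⟨fun p => ?_, ?_⟩
  · rw [List.take_set]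
    rcases lt_or_ge k p with hkp | hpk
    · have hdown' : ((D ++ [false, false]).take p)[k]? = some false := by
        rwa [List.getElem?_take, if_pos hkp]
      have hflip := List.count_set_true_of_getElem?_eq_false hdown'
      have hbound := hD.count_false_take_append_le [false, false] p
      simp only [List.length_cons, List.length_nil] at hbound
      omega
    · rw [List.set_eq_of_length_le ((List.length_take_le _ _).trans hpk),
        List.take_append_of_le_length (by omega)]
      exact hD.1 p
  · have hflip := List.count_set_true_of_getElem?_eq_false hdown
    simp [List.count_append] at hflip
    have := hD.2
    omega

theorem lt_succ_length_and_getElem?_append_false_iff (D : List Bool) (k : ℕ) :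
    (k < D.length + 1 ∧ (D ++ [false, false])[k]? = some false) ↔
      (D ++ [false])[k]? = some false := by
  rw [show D ++ [false, false] = D ++ [false] ++ [false] by simp]
  constructor
  · rintro ⟨hk, h⟩
    rwa [List.getElem?_append_left (by simp; omega)] at h
  · intro h
    have hk : k < (D ++ [false]).length := (List.getElem?_eq_some_iff.mp h).1
    exact ⟨by simpa using hk, by rwa [List.getElem?_append_left hk]⟩

theorem setOf_ribbon_eq_image (D : List Bool) :
    {E | Ribbon D E} =
      (fun k => (D ++ [false, false]).set k true) '' {k | (D ++ [false])[k]? = some false} := by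
  ext E
  constructor
  · rintro ⟨k, hk, hdown, rfl⟩
    exact ⟨k, (lt_succ_length_and_getElem?_append_false_iff D k).mp ⟨hk, hdown⟩, rfl⟩
  · rintro ⟨k, hk, rfl⟩
    obtain ⟨hk, hdown⟩ := (lt_succ_length_and_getElem?_append_false_iff D k).mpr hk
    exact ⟨k, hk, hdown, rfl⟩

theorem ncard_setOf_ribbon (D : List Bool) : {E | Ribbon D E}.ncard = D.count false + 1 := by
  have hinj : Set.InjOn (fun k => (D ++ [false, false]).set k true)
      {k | (D ++ [false])[k]? = some false} :=
    (List.injOn_set_setOf_getElem?_eq Bool.false_ne_true).mono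
      fun k hk => ((lt_succ_length_and_getElem?_append_false_iff D k).mpr hk).2
  rw [setOf_ribbon_eq_image, hinj.ncard_image, List.ncard_setOf_getElem?_eq]
  simp

/-- For a Dyck word `D` of length `2n`, the Dyck words `E` obtained from
`D ++ [↘, ↘]` by changing one down step other than the last one into an up
step are exactly `n + 1` in number. -/
theorem card_ribbon_successors (n : ℕ) (D : List Bool)
    (hD : IsDyck D) (hlen : D.length = 2 * n) :
    {E : List Bool | IsDyck E ∧ Ribbon D E}.ncard = n + 1 := by
  have hsucc : {E | IsDyck E ∧ Ribbon D E} = {E | Ribbon D E} :=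
    Set.ext fun _ => and_iff_right_of_imp hD.of_ribbon
  have hdown : D.count false = n := by
    have := D.count_false_add_count_true
    have := hD.2
    omega
  rw [hsucc, ncard_setOf_ribbon, hdown]
end

section
/- Identify each Dyck path with its infinite binary word (the path's steps as 1's and 0's followed by infinitely many 0's). For Dyck paths D and E with words (d_i) and (e_i), D ≤ E in the transitive-reflexive closure of the ribbon-addition relation ⊏ if and only if d_i ≤ e_i for all i. -/
/-- The infinite binary word of a Dyck path: its steps (`true` = 1 = up,
`false` = 0 = down) followed by infinitely many 0's. -/
def wordOf (w : List Bool) : ℕ → Bool := fun i => w.getD i false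

open Finset Function

section Word

variable {v w : List Bool} {i : ℕ}

lemma wordOf_eq_false (h : w.length ≤ i) : wordOf w i = false :=
  List.getD_eq_default w false h

lemma wordOf_eq_getElem (h : i < w.length) : wordOf w i = w[i] :=
  List.getD_eq_getElem w false h

lemma getElem?_eq_some_wordOf (h : i < w.length) : w[i]? = some (wordOf w i) := by
  rw [wordOf_eq_getElem h, List.getElem?_eq_getElem h]

lemma lt_length_of_wordOf_eq_true (h : wordOf w i = true) : i < w.length := by
  by_contra hi
  rw [wordOf_eq_false (not_lt.mp hi)] at h
  exact Bool.false_ne_true h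

lemma wordOf_append_replicate_false (n : ℕ) :
    wordOf (w ++ List.replicate n false) = wordOf w := by
  funext i
  simp only [wordOf, List.getD_eq_getElem?_getD, List.getElem?_append, List.getElem?_replicate]
  split_ifs <;> simp_all

lemma wordOf_set {k : ℕ} (hk : k < w.length) (b : Bool) :
    wordOf (w.set k b) = update (wordOf w) k b := by
  funext i
  rcases eq_or_ne i k with rfl | hi
  · simp [wordOf, hk]
  · simp [wordOf, hi, List.getD_eq_getElem?_getD, Ne.symm hi]

lemma wordOf_ofFn {n : ℕ} {f : ℕ → Bool} (hf : ∀ i, n ≤ i → f i = false) :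
    wordOf (List.ofFn fun i : Fin n => f i) = f := by
  funext i
  simp only [wordOf, List.getD_eq_getElem?_getD, List.getElem?_ofFn]
  split_ifs with h
  · rfl
  · exact (hf i (not_lt.mp h)).symm

lemma eq_of_wordOf_eq (hlen : v.length = w.length) (h : wordOf v = wordOf w) : v = w :=
  List.ext_getElem hlen fun i hv hw => by
    rw [← wordOf_eq_getElem hv, ← wordOf_eq_getElem hw, h]

end Word

lemma ribbon_iff {X Y : List Bool} :
    Ribbon X Y ↔ Y.length = X.length + 2 ∧
      ∃ k < X.length + 1, wordOf X k = false ∧ wordOf Y = update (wordOf X) k true := by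
  have hpad : wordOf (X ++ [false, false]) = wordOf X := wordOf_append_replicate_false 2
  constructor
  · rintro ⟨k, hk, hkf, rfl⟩
    rw [getElem?_eq_some_wordOf (by simp; omega), hpad, Option.some_inj] at hkf
    refine ⟨by simp, k, hk, hkf, ?_⟩
    rw [wordOf_set (by simp; omega), hpad]
  · rintro ⟨hYlen, k, hk, hkf, hY⟩
    refine ⟨k, hk, ?_, eq_of_wordOf_eq (by simp [hYlen]) ?_⟩
    · rw [getElem?_eq_some_wordOf (by simp; omega), hpad, hkf]
    · rw [wordOf_set (by simp; omega), hpad, hY]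

lemma wordOf_le_of_ribbon {X Y : List Bool} (h : Ribbon X Y) : wordOf X ≤ wordOf Y := by
  obtain ⟨-, k, -, hk, hY⟩ := ribbon_iff.mp h
  intro i
  rw [hY]
  rcases eq_or_ne i k with rfl | hi
  · simp
  · simp [hi]

lemma exists_lt_and_eqOn_Ioi {f g : ℕ → Bool} {n : ℕ} (h : f < g)
    (hg : ∀ i, n ≤ i → g i = false) :
    ∃ k, f k < g k ∧ Set.EqOn f g (Set.Ioi k) := by
  obtain ⟨hle, i, hi⟩ := Pi.lt_def.mp h
  have hin : i < n := by
    by_contra hni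
    rw [hg i (not_lt.mp hni)] at hi
    exact not_lt_bot hi
  refine ⟨Nat.findGreatest (fun j => f j < g j) n,
    Nat.findGreatest_spec (P := fun j => f j < g j) hin.le hi, fun j hj => ?_⟩
  rcases le_or_gt j n with hjn | hjn
  · exact le_antisymm (hle j) (not_lt.mp (Nat.findGreatest_is_greatest hj hjn))
  · rw [hg j hjn.le]
    exact le_bot_iff.mp ((hle j).trans_eq (hg j hjn.le))

def countOnes (f : ℕ → Bool) (p : ℕ) : ℕ := ∑ i ∈ range p, (f i).toNat

section countOnes

variable {f g : ℕ → Bool} {i n p : ℕ}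

lemma count_true_take (w : List Bool) (p : ℕ) :
    (w.take p).count true = countOnes (wordOf w) p := by
  induction p with
  | zero => simp [countOnes]
  | succ p ih =>
    rw [List.take_add_one, List.count_append, ih, countOnes, countOnes, sum_range_succ]
    congr 1
    cases h : w[p]? with
    | none => simp [wordOf, List.getD_eq_getElem?_getD, h]
    | some b => cases b <;> simp [wordOf, List.getD_eq_getElem?_getD, h]

lemma countOnes_eq_of_le (hf : ∀ i, n ≤ i → f i = false) (h : n ≤ p) :
    countOnes f p = countOnes f n :=
  (sum_subset (range_subset_range.2 h) fun i _ hi => by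
    rw [hf i (by simpa using hi), Bool.toNat_false]).symm

lemma countOnes_mono (h : f ≤ g) (p : ℕ) : countOnes f p ≤ countOnes g p :=
  sum_le_sum fun i _ => Bool.toNat_le_toNat (h i)

lemma countOnes_lt_countOnes (h : f ≤ g) (hi : f i < g i) (hip : i < p) :
    countOnes f p < countOnes g p :=
  sum_lt_sum (fun i _ => Bool.toNat_le_toNat (h i))
    ⟨i, mem_range.2 hip, by simp_all [Bool.lt_iff]⟩

lemma countOnes_add_countOnes_of_eqOn_Ioi {k : ℕ} (hfg : Set.EqOn f g (Set.Ioi k))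
    (hkp : k < p) (hpn : p ≤ n) :
    countOnes f p + countOnes g n = countOnes f n + countOnes g p := by
  have htail : ∑ j ∈ Ico p n, (f j).toNat = ∑ j ∈ Ico p n, (g j).toNat :=
    sum_congr rfl fun j hj => by rw [hfg (show k < j by simp at hj; omega)]
  rw [countOnes, countOnes, countOnes, countOnes,
    ← sum_range_add_sum_Ico (fun j => (f j).toNat) hpn,
    ← sum_range_add_sum_Ico (fun j => (g j).toNat) hpn, htail]
  ring

lemma countOnes_update_of_le {k : ℕ} (b : Bool) (hp : p ≤ k) :
    countOnes (update f k b) p = countOnes f p :=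
  sum_congr rfl fun i hi => by rw [update_of_ne (by simp at hi; omega)]

lemma countOnes_update_false_add_one {k : ℕ} (hk : f k = true) (hp : k < p) :
    countOnes (update f k false) p + 1 = countOnes f p := by
  have hmem : k ∈ range p := mem_range.2 hp
  rw [countOnes, countOnes, ← add_sum_erase _ _ hmem, ← add_sum_erase _ _ hmem,
    sum_congr rfl fun i hi => by rw [update_of_ne (ne_of_mem_erase hi)]]
  simp [hk]
  omega

end countOnes

theorem isDyck_iff {w : List Bool} :
    IsDyck w ↔ (∀ p ≤ w.length, p ≤ 2 * countOnes (wordOf w) p) ∧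
      w.length = 2 * countOnes (wordOf w) w.length := by
  have hsplit : ∀ p, (w.take p).count false + countOnes (wordOf w) p = min p w.length := by
    intro p
    rw [← count_true_take, add_comm, List.count_true_add_count_false, List.length_take]
  have htotal := hsplit w.length
  simp only [List.take_length, min_self] at htotal
  have htotal' := count_true_take w w.length
  rw [List.take_length] at htotal'
  refine ⟨fun ⟨hpre, htot⟩ => ⟨fun p hp => ?_, by omega⟩,
    fun ⟨hpre, htot⟩ => ⟨fun p => ?_, by omega⟩⟩
  · have := hpre p
    have := hsplit p
    rw [count_true_take] at *
    omega
  · rcases le_or_gt p w.length with hp | hp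
    · have := hpre p hp
      have := hsplit p
      rw [count_true_take]
      omega
    · rw [List.take_of_length_le hp.le]
      omega

namespace IsDyck

variable {w D E : List Bool}

lemma length_eq_two_mul_countOnes (hw : IsDyck w) {n : ℕ} (hn : w.length ≤ n) :
    w.length = 2 * countOnes (wordOf w) n := by
  rw [countOnes_eq_of_le (fun i hi => wordOf_eq_false hi) hn]
  exact (isDyck_iff.mp hw).2

lemma wordOf_length_sub_one (hw : IsDyck w) : wordOf w (w.length - 1) = false := by
  obtain ⟨hpre, htot⟩ := isDyck_iff.mp hw
  rcases hlen : w.length with _ | m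
  · exact wordOf_eq_false (by omega)
  rw [Nat.add_sub_cancel]
  by_contra hlast
  rw [Bool.not_eq_false] at hlast
  have hm := hpre m (by omega)
  rw [hlen, countOnes, sum_range_succ, ← countOnes, hlast, Bool.toNat_true] at htot
  omega

lemma length_le_length (hD : IsDyck D) (hE : IsDyck E) (h : wordOf D ≤ wordOf E) :
    D.length ≤ E.length := by
  have := countOnes_mono h (D.length + E.length)
  have hDc := hD.length_eq_two_mul_countOnes (Nat.le_add_right _ E.length)
  have hEc := hE.length_eq_two_mul_countOnes (Nat.le_add_left _ D.length)
  omega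

lemma length_add_two_le (hD : IsDyck D) (hE : IsDyck E) (h : wordOf D < wordOf E) :
    D.length + 2 ≤ E.length := by
  obtain ⟨hle, i, hi⟩ := Pi.lt_def.mp h
  have hiE : i < E.length := lt_length_of_wordOf_eq_true (Bool.lt_iff.mp hi).2
  have := countOnes_lt_countOnes hle hi (show i < D.length + E.length by omega)
  have hDc := hD.length_eq_two_mul_countOnes (Nat.le_add_right _ E.length)
  have hEc := hE.length_eq_two_mul_countOnes (Nat.le_add_left _ D.length)
  omega

lemma of_wordOf_eq_update {E' : List Bool} (hD : IsDyck D) (hE : IsDyck E)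
    (hDE : D.length < E.length) {k : ℕ} (hk : wordOf E k = true)
    (hagree : Set.EqOn (wordOf D) (wordOf E) (Set.Ioi k))
    (hE' : wordOf E' = update (wordOf E) k false) (hlen : E'.length + 2 = E.length) :
    IsDyck E' := by
  obtain ⟨hDpre, hDtot⟩ := isDyck_iff.mp hD
  obtain ⟨hEpre, hEtot⟩ := isDyck_iff.mp hE
  have hkE : k < E.length := lt_length_of_wordOf_eq_true hk
  have hDfull := countOnes_eq_of_le (f := wordOf D) (fun i hi => wordOf_eq_false hi) hDE.le
  have hE'full := countOnes_eq_of_le (f := wordOf E') (fun i hi => wordOf_eq_false hi)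
    (show E'.length ≤ E.length by omega)
  rw [hE'] at hE'full
  have hremove := countOnes_update_false_add_one hk hkE
  rw [isDyck_iff, hE']
  refine ⟨fun p hp => ?_, by omega⟩
  rcases le_or_gt p k with hpk | hpk
  · rw [countOnes_update_of_le false hpk]
    exact hEpre p (by omega)
  · have := countOnes_update_false_add_one hk hpk
    have := countOnes_add_countOnes_of_eqOn_Ioi hagree hpk (show p ≤ E.length by omega)
    rcases le_or_gt p D.length with hpD | hpD
    · have := hDpre p hpD
      omega
    · have := countOnes_eq_of_le (f := wordOf D) (fun i hi => wordOf_eq_false hi) hpD.le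
      omega

lemma exists_ribbon_of_wordOf_lt (hD : IsDyck D) (hE : IsDyck E)
    (h : wordOf D < wordOf E) : ∃ E', IsDyck E' ∧ wordOf D ≤ wordOf E' ∧ Ribbon E' E := by
  have hlen := hD.length_add_two_le hE h
  obtain ⟨k, hk, hagree⟩ := exists_lt_and_eqOn_Ioi h (fun i hi => wordOf_eq_false (w := E) hi)
  obtain ⟨hDk, hEk⟩ := Bool.lt_iff.mp hk
  have hkE : k + 2 ≤ E.length := by
    have hlast := hE.wordOf_length_sub_one
    have : k ≠ E.length - 1 := by rintro rfl; simp_all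
    have := lt_length_of_wordOf_eq_true hEk
    omega
  have hf : ∀ i, E.length - 2 ≤ i → update (wordOf E) k false i = false := by
    intro i hi
    rcases eq_or_ne i k with rfl | hik
    · exact update_self ..
    · rw [update_of_ne hik, ← hagree (show k < i by omega), wordOf_eq_false (by omega)]
  have hE' := wordOf_ofFn hf
  refine ⟨List.ofFn fun i : Fin (E.length - 2) => update (wordOf E) k false i, ?_, ?_, ?_⟩
  · exact hD.of_wordOf_eq_update hE (by omega) hEk hagree hE' (by simp; omega)
  · rw [hE']
    intro i
    rcases eq_or_ne i k with rfl | hik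
    · simp [hDk]
    · simpa [hik] using h.le i
  · refine ribbon_iff.mpr ⟨by simp; omega, k, by simp; omega, by rw [hE']; simp, ?_⟩
    rw [hE', update_idem, update_eq_self_iff.mpr hEk.symm]

end IsDyck

lemma reflTransGen_ribbon_of_wordOf_le {D E : List Bool} (hD : IsDyck D) (hE : IsDyck E)
    (h : wordOf D ≤ wordOf E) :
    Relation.ReflTransGen (fun X Y => IsDyck X ∧ IsDyck Y ∧ Ribbon X Y) D E := by
  induction hn : E.length using Nat.strong_induction_on generalizing E with
  | _ n ih =>
    rcases h.lt_or_eq with hlt | heq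
    · obtain ⟨E', hE', hDE', hrib⟩ := hD.exists_ribbon_of_wordOf_lt hE hlt
      have hlen := (ribbon_iff.mp hrib).1
      exact (ih E'.length (by omega) hE' hDE' rfl).tail ⟨hE', hE, hrib⟩
    · have hlen := le_antisymm (hD.length_le_length hE h) (hE.length_le_length hD heq.ge)
      rw [eq_of_wordOf_eq hlen heq]

/-- For Dyck paths `D` and `E` with infinite binary words `(d_i)`, `(e_i)`, we
have `D ≤ E` in the reflexive-transitive closure of the ribbon-addition
relation `⊏` if and only if `d_i ≤ e_i` for all `i`. -/
theorem dyck_order_iff_componentwise (D E : List Bool)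
    (hD : IsDyck D) (hE : IsDyck E) :
    Relation.ReflTransGen (fun X Y => IsDyck X ∧ IsDyck Y ∧ Ribbon X Y) D E ↔
      ∀ i : ℕ, wordOf D i ≤ wordOf E i := by
  refine ⟨fun h => ?_, reflTransGen_ribbon_of_wordOf_le hD hE⟩
  have := Relation.ReflTransGen.lift wordOf (fun X Y hXY => wordOf_le_of_ribbon hXY.2.2) _ _ h
  rwa [Relation.reflTransGen_eq_self] at this
end

section
/- For two Dyck words D and E (infinite binary words coming from Dyck paths with appended 0's), the componentwise maximum (max(d_i, e_i))_{i≥1} is again a Dyck word, and it is the least upper bound of D and E in the componentwise order. -/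
private lemma count_bool (l : List Bool) : l.count false + l.count true = l.length := by
  simp [List.count_eq_countP, List.length_eq_countP_add_countP (fun b => b = true)]
  exact Nat.add_comm _ _

private lemma getD_map_range (f : ℕ → Bool) (k i : ℕ) :
    ((List.range k).map f).getD i false = if i < k then f i else false := by
  by_cases h : i < k
  · rw [if_pos h, List.getD_eq_getElem _ _ (by simpa using h)]
    simp
  · rw [if_neg h, List.getD_eq_default]
    simpa using Nat.not_lt.mp h

private lemma half_bound (D : List Bool) (hD : IsDyck D) (f : ℕ → Bool)
    (hle : ∀ i, wordOf D i = true → f i = true) (q : ℕ) (hq : q ≤ D.length) :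
    q ≤ 2 * ((List.range q).map f).count true := by
  have h1 := hD.1 q
  have h2 := count_bool (D.take q)
  have hlen : (D.take q).length = q := by simp [hq]
  have heq : (List.range q).map (wordOf D) = D.take q := by
    apply List.ext_getElem
    · simp [hq]
    · intro i h₁ h₂
      simp only [List.getElem_map, List.getElem_range, List.getElem_take, wordOf]
      rw [List.getD_eq_getElem]
  have h4 : (D.take q).count true ≤ ((List.range q).map f).count true := by
    rw [← heq, List.count_eq_countP, List.countP_map, List.count_eq_countP, List.countP_map]
    apply List.countP_mono_left
    intro i _ h
    simp only [Function.comp_apply, beq_iff_eq] at h ⊢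
    exact hle i h
  omega

private lemma exists_dyck_of (f : ℕ → Bool) (n : ℕ)
    (hf : ∀ i, n ≤ i → f i = false)
    (hq : ∀ q, q ≤ n → q ≤ 2 * ((List.range q).map f).count true) :
    ∃ J : List Bool, IsDyck J ∧ ∀ i, wordOf J i = f i := by
  set m := ((List.range n).map f).count true with hm
  have hn2m : n ≤ 2 * m := hq n le_rfl
  have hcount : ∀ q, n ≤ q → ((List.range q).map f).count true = m := by
    intro q hq'
    have hqe : q = n + (q - n) := (Nat.add_sub_cancel' hq').symm
    rw [hqe, List.range_add, List.map_append, List.count_append, List.map_map]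
    have h0 : ((List.range (q - n)).map (f ∘ fun x => n + x)).count true = 0 := by
      rw [List.count_eq_zero]
      simp only [List.mem_map, Function.comp_apply]
      rintro ⟨x, -, hx⟩
      rw [hf (n + x) (Nat.le_add_right n x)] at hx
      exact Bool.false_ne_true hx
    rw [h0, ← hm]
    omega
  have key : ∀ q, q ≤ 2 * m → q ≤ 2 * ((List.range q).map f).count true := by
    intro q hq2
    rcases le_or_gt q n with h | h
    · exact hq q h
    · rw [hcount q h.le]; exact hq2
  refine ⟨(List.range (2 * m)).map f, ⟨?_, ?_⟩, ?_⟩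
  · intro p
    have htake : ((List.range (2 * m)).map f).take p = (List.range (min p (2 * m))).map f := by
      rw [← List.map_take, List.take_range]
    rw [htake]
    have h1 := count_bool ((List.range (min p (2 * m))).map f)
    have h2 := key (min p (2 * m)) (min_le_right _ _)
    have h3 : ((List.range (min p (2 * m))).map f).length = min p (2 * m) := by simp
    omega
  · have h1 := count_bool ((List.range (2 * m)).map f)
    have h2 := hcount (2 * m) hn2m
    have h3 : ((List.range (2 * m)).map f).length = 2 * m := by simp
    omega
  · intro i
    rw [wordOf]
    rw [getD_map_range]
    by_cases h : i < 2 * m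
    · rw [if_pos h]
    · rw [if_neg h, hf i (by omega)]

/-- For two Dyck words `D`, `E`, the componentwise maximum of their infinite
binary words is again a Dyck word, and it is the least upper bound of `D` and
`E` in the componentwise order. -/
theorem dyck_componentwise_max_is_join (D E : List Bool)
    (hD : IsDyck D) (hE : IsDyck E) :
    ∃ J : List Bool, IsDyck J ∧
      (∀ i : ℕ, wordOf J i = wordOf D i ⊔ wordOf E i) ∧
      (∀ i : ℕ, wordOf D i ≤ wordOf J i) ∧
      (∀ i : ℕ, wordOf E i ≤ wordOf J i) ∧
      ∀ F : List Bool, IsDyck F → (∀ i : ℕ, wordOf D i ≤ wordOf F i) →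
        (∀ i : ℕ, wordOf E i ≤ wordOf F i) →
        ∀ i : ℕ, wordOf J i ≤ wordOf F i := by
  obtain ⟨J, hJ, hJw⟩ := exists_dyck_of (fun i => wordOf D i || wordOf E i)
      (max D.length E.length)
      (by
        intro i hi
        rw [wordOf, wordOf, List.getD_eq_default _ _ (le_trans (le_max_left _ _) hi),
          List.getD_eq_default _ _ (le_trans (le_max_right _ _) hi)]
        rfl)
      (by
        intro q hqn
        rcases le_max_iff.mp hqn with h | h
        · exact half_bound D hD _ (by intro i hi; rw [hi]; rfl) q h
        · exact half_bound E hE _ (by intro i hi; rw [hi, Bool.or_true]) q h)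
  refine ⟨J, hJ, ?_, ?_, ?_, ?_⟩
  · intro i; rw [hJw i]; cases wordOf D i <;> cases wordOf E i <;> rfl
  · intro i; rw [hJw i]; cases wordOf D i <;> simp
  · intro i; rw [hJw i]; cases wordOf E i <;> simp
  · intro F _ hDF hEF i
    rw [hJw i]
    have h1 := hDF i
    have h2 := hEF i
    cases hd : wordOf D i <;> cases he : wordOf E i <;> cases hf : wordOf F i <;>
      simp_all
end

section
/- For every permutation σ of {1,...,n} (with the convention σ_0 = 0 and σ_{n+1} = n+1), the profile word Δ(σ), defined by replacing each value i ∈ {1,...,n} by the pair of steps UU if i is a valley, DD if i is a peak, UD if i is a double ascent, and DU if i is a double descent, is a Dyck path of length 2n. -/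
/-- The one-line word of `σ ∈ S_n` on values `1, …, n`, extended by the
conventions `σ₀ = 0` and `σ_{n+1} = n+1`. -/
def extPerm {n : ℕ} (σ : Equiv.Perm (Fin n)) : ℕ → ℕ := fun i =>
  if h : 1 ≤ i ∧ i ≤ n then ((σ ⟨i - 1, by omega⟩ : Fin n) : ℕ) + 1
  else if i = 0 then 0 else n + 1

/-- The position (between `1` and `n`) of the value `v` (between `1` and `n`)
in the one-line word of `σ`. -/
def posOf {n : ℕ} (σ : Equiv.Perm (Fin n)) (v : ℕ) : ℕ :=
  if h : v - 1 < n then ((σ.symm ⟨v - 1, h⟩ : Fin n) : ℕ) + 1 else 0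

/-- The profile `Δ(σ)` of a permutation: the word `w₁ ⋯ w_{2n}` in which the
factor `w_{2i-1} w_{2i}` is `UU` if the value `i` is a valley, `DD` if it is a
peak, `UD` if it is a double ascent and `DU` if it is a double descent.  (Here
`w_{2i-1} = U` iff `σ` increases at the position after `i`, and `w_{2i} = U`
iff `σ` decreases at the position before `i`.) -/
def profile {n : ℕ} (σ : Equiv.Perm (Fin n)) : List Bool :=
  (List.range (2 * n)).map fun j =>
    let p := posOf σ (j / 2 + 1)
    if j % 2 = 0 then decide (extPerm σ p < extPerm σ (p + 1))
    else decide (extPerm σ p < extPerm σ (p - 1))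

namespace ProfileDyck

variable {n : ℕ}

lemma e_zero (σ : Equiv.Perm (Fin n)) : extPerm σ 0 = 0 := by
  simp [extPerm]

lemma e_top (σ : Equiv.Perm (Fin n)) : extPerm σ (n+1) = n+1 := by
  have h : ¬ (1 ≤ n+1 ∧ n+1 ≤ n) := by omega
  simp [extPerm, h]

lemma e_rng (σ : Equiv.Perm (Fin n)) {j : ℕ} (h1 : 1 ≤ j) (h2 : j ≤ n) :
    1 ≤ extPerm σ j ∧ extPerm σ j ≤ n := by
  have h : 1 ≤ j ∧ j ≤ n := ⟨h1, h2⟩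
  simp only [extPerm, dif_pos h]
  have := (σ ⟨j-1, by omega⟩).isLt
  omega

lemma e_pos (σ : Equiv.Perm (Fin n)) {j : ℕ} (h1 : 1 ≤ j) : 1 ≤ extPerm σ j := by
  simp only [extPerm]
  split_ifs with h h2
  · omega
  · omega
  · omega

lemma e_val (σ : Equiv.Perm (Fin n)) (a : Fin n) :
    extPerm σ ((a : ℕ) + 1) = (σ a : ℕ) + 1 := by
  have ha : (a:ℕ) < n := a.isLt
  have hcond : 1 ≤ (a:ℕ)+1 ∧ (a:ℕ)+1 ≤ n := ⟨by omega, by omega⟩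
  simp only [extPerm, dif_pos hcond]
  have h2 : (⟨(a:ℕ)+1-1, by omega⟩ : Fin n) = a :=
    Fin.ext (show (a:ℕ)+1-1 = (a:ℕ) by omega)
  rw [h2]

lemma posOf_val (σ : Equiv.Perm (Fin n)) (a : Fin n) :
    posOf σ ((a:ℕ)+1) = (σ.symm a : ℕ) + 1 := by
  have ha : (a:ℕ) < n := a.isLt
  have hv : (a:ℕ)+1-1 < n := by omega
  simp only [posOf, dif_pos hv]
  have harg : (⟨(a:ℕ)+1-1, hv⟩ : Fin n) = a :=
    Fin.ext (show (a:ℕ)+1-1 = (a:ℕ) by omega)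
  rw [harg]

lemma e_adj (σ : Equiv.Perm (Fin n)) {j : ℕ} (hj : j ≤ n) :
    extPerm σ j ≠ extPerm σ (j+1) := by
  rcases Nat.eq_zero_or_pos j with rfl | hj1
  · have h1 : 1 ≤ extPerm σ (0+1) := e_pos σ le_rfl
    rw [e_zero]
    omega
  rcases Nat.lt_or_ge j n with hjn | hjn
  · have h1 : 1 ≤ j ∧ j ≤ n := ⟨hj1, hj⟩
    have h2 : 1 ≤ j+1 ∧ j+1 ≤ n := ⟨by omega, hjn⟩
    simp only [extPerm, dif_pos h1, dif_pos h2]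
    intro h
    have h' : σ (⟨j - 1, by omega⟩ : Fin n) = σ ⟨j + 1 - 1, by omega⟩ :=
      Fin.ext (Nat.succ_injective h)
    have h'' : j - 1 = j + 1 - 1 := congrArg Fin.val (σ.injective h')
    omega
  · have hj' : j = n := le_antisymm hj hjn
    subst hj'
    have h1 := e_rng σ hj1 le_rfl
    rw [e_top]
    omega

lemma q_spec (σ : Equiv.Perm (Fin n)) {v : ℕ} (h1 : 1 ≤ v) (h2 : v ≤ n) :
    1 ≤ posOf σ v ∧ posOf σ v ≤ n ∧ extPerm σ (posOf σ v) = v := by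
  have hv : v - 1 < n := by omega
  have hveq : v = ((⟨v-1,hv⟩ : Fin n) : ℕ) + 1 := by
    show v = v - 1 + 1; omega
  rw [hveq, posOf_val]
  have := (σ.symm ⟨v-1,hv⟩).isLt
  refine ⟨by omega, by omega, ?_⟩
  rw [e_val, Equiv.apply_symm_apply]

lemma q_e (σ : Equiv.Perm (Fin n)) {p : ℕ} (h1 : 1 ≤ p) (h2 : p ≤ n) :
    posOf σ (extPerm σ p) = p := by
  have hp : p - 1 < n := by omega
  have hpeq : p = ((⟨p-1,hp⟩ : Fin n) : ℕ) + 1 := by show p = p - 1 + 1; omega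
  rw [hpeq, e_val, posOf_val, Equiv.symm_apply_apply]

def pfun (σ : Equiv.Perm (Fin n)) (j : ℕ) : Bool :=
  let p := posOf σ (j / 2 + 1)
  if j % 2 = 0 then decide (extPerm σ p < extPerm σ (p + 1))
  else decide (extPerm σ p < extPerm σ (p - 1))

lemma profile_eq (σ : Equiv.Perm (Fin n)) :
    profile σ = (List.range (2*n)).map (pfun σ) := rfl

def stp (σ : Equiv.Perm (Fin n)) (j : ℕ) : ℤ :=
  if extPerm σ j < extPerm σ (j+1) then 1 else -1

def pstep (σ : Equiv.Perm (Fin n)) (j : ℕ) : ℤ := if pfun σ j then 1 else -1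

def lo (σ : Equiv.Perm (Fin n)) (k j : ℕ) : ℤ :=
  if extPerm σ j ≤ k then 1 else 0

def B (σ : Equiv.Perm (Fin n)) (m : ℕ) : ℤ := ∑ j ∈ Finset.range m, pstep σ j

lemma pfun_even (σ : Equiv.Perm (Fin n)) (k : ℕ) :
    pfun σ (2*k) = decide (extPerm σ (posOf σ (k+1)) < extPerm σ (posOf σ (k+1) + 1)) := by
  have h1 : (2*k) % 2 = 0 := by omega
  have h2 : (2*k) / 2 = k := by omega
  simp only [pfun, h2, if_pos h1]

lemma pfun_odd (σ : Equiv.Perm (Fin n)) (k : ℕ) :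
    pfun σ (2*k+1) = decide (extPerm σ (posOf σ (k+1)) < extPerm σ (posOf σ (k+1) - 1)) := by
  have h1 : ¬ ((2*k+1) % 2 = 0) := by omega
  have h2 : (2*k+1) / 2 = k := by omega
  simp only [pfun, h2, if_neg h1]

lemma pstep_even (σ : Equiv.Perm (Fin n)) (k : ℕ) :
    pstep σ (2*k) = stp σ (posOf σ (k+1)) := by
  rw [pstep, pfun_even, stp]
  by_cases h : extPerm σ (posOf σ (k+1)) < extPerm σ (posOf σ (k+1)+1) <;> simp [h]

lemma pstep_odd (σ : Equiv.Perm (Fin n)) {k : ℕ} (hk : k < n) :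
    pstep σ (2*k+1) = - stp σ (posOf σ (k+1) - 1) := by
  obtain ⟨hq1, hq2, hqe⟩ := q_spec σ (v := k+1) (by omega) (by omega)
  rw [pstep, pfun_odd]
  set p := posOf σ (k+1) with hp
  have hadj : extPerm σ (p-1) ≠ extPerm σ (p-1+1) := e_adj σ (by omega)
  have hpp : p - 1 + 1 = p := by omega
  rw [hpp] at hadj
  rw [stp, hpp]
  simp only [decide_eq_true_eq]
  rcases Nat.lt_or_ge (extPerm σ p) (extPerm σ (p-1)) with h | h
  · rw [if_pos h, if_neg (by omega)]
    norm_num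
  · have h'' : extPerm σ (p-1) < extPerm σ p := by omega
    rw [if_neg (by omega), if_pos h'']

lemma B_even (σ : Equiv.Perm (Fin n)) : ∀ k, k ≤ n →
    B σ (2*k) = ∑ i ∈ Finset.range k,
      (stp σ (posOf σ (i+1)) - stp σ (posOf σ (i+1) - 1)) := by
  intro k
  induction k with
  | zero => intro _; simp [B]
  | succ k ih =>
    intro hk
    have h2 : 2*(k+1) = (2*k+1)+1 := by ring
    rw [B, h2, Finset.sum_range_succ, Finset.sum_range_succ, ← B,
      ih (by omega), Finset.sum_range_succ, pstep_even, pstep_odd σ (by omega : k < n)]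
    ring

lemma B_reindex (σ : Equiv.Perm (Fin n)) {k : ℕ} (hk : k ≤ n) :
    ∑ i ∈ Finset.range k, (stp σ (posOf σ (i+1)) - stp σ (posOf σ (i+1) - 1))
      = ∑ i ∈ Finset.range n, lo σ k (i+1) * (stp σ (i+1) - stp σ i) := by
  have hfilter : ∀ i ∈ Finset.range n,
      lo σ k (i+1) * (stp σ (i+1) - stp σ i)
        = if extPerm σ (i+1) ≤ k then (stp σ (i+1) - stp σ i) else 0 := by
    intro i _
    by_cases h : extPerm σ (i+1) ≤ k <;> simp [lo, h]
  rw [Finset.sum_congr rfl hfilter, ← Finset.sum_filter]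
  refine Finset.sum_nbij' (fun i => posOf σ (i+1) - 1) (fun i => extPerm σ (i+1) - 1)
    ?_ ?_ ?_ ?_ ?_
  · intro a ha
    simp only [Finset.mem_range] at ha
    obtain ⟨hq1, hq2, hqe⟩ := q_spec σ (v := a+1) (by omega) (by omega)
    simp only [Finset.mem_filter, Finset.mem_range]
    constructor
    · omega
    · rw [show posOf σ (a+1) - 1 + 1 = posOf σ (a+1) by omega, hqe]
      omega
  · intro b hb
    simp only [Finset.mem_filter, Finset.mem_range] at hb
    obtain ⟨hb1, hb2⟩ := hb
    have he := e_rng σ (j := b+1) (by omega) (by omega)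
    simp only [Finset.mem_range]
    omega
  · intro a ha
    simp only [Finset.mem_range] at ha
    obtain ⟨hq1, hq2, hqe⟩ := q_spec σ (v := a+1) (by omega) (by omega)
    rw [show posOf σ (a+1) - 1 + 1 = posOf σ (a+1) by omega, hqe]
    omega
  · intro b hb
    simp only [Finset.mem_filter, Finset.mem_range] at hb
    obtain ⟨hb1, hb2⟩ := hb
    have he := e_rng σ (j := b+1) (by omega) (by omega)
    rw [show extPerm σ (b+1) - 1 + 1 = extPerm σ (b+1) by omega,
      q_e σ (by omega) (by omega)]
    omega
  · intro a ha
    simp only [Finset.mem_range] at ha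
    obtain ⟨hq1, hq2, hqe⟩ := q_spec σ (v := a+1) (by omega) (by omega)
    rw [show posOf σ (a+1) - 1 + 1 = posOf σ (a+1) by omega]

lemma lo_zero (σ : Equiv.Perm (Fin n)) (k : ℕ) : lo σ k 0 = 1 := by
  rw [lo, if_pos (by rw [e_zero]; omega)]

lemma lo_top (σ : Equiv.Perm (Fin n)) {k : ℕ} (hk : k ≤ n) : lo σ k (n+1) = 0 := by
  rw [lo, if_neg (by rw [e_top]; omega)]

lemma stp_zero (σ : Equiv.Perm (Fin n)) : stp σ 0 = 1 := by
  have h1 : 1 ≤ extPerm σ (0+1) := e_pos σ le_rfl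
  have h0 := e_zero σ
  rw [stp, if_pos (by omega)]

lemma B_abel (σ : Equiv.Perm (Fin n)) {k : ℕ} (hk : k ≤ n) :
    ∑ i ∈ Finset.range n, lo σ k (i+1) * (stp σ (i+1) - stp σ i)
      = (∑ j ∈ Finset.range (n+1), stp σ j * (lo σ k j - lo σ k (j+1))) - 1 := by
  calc ∑ i ∈ Finset.range n, lo σ k (i+1) * (stp σ (i+1) - stp σ i)
      = (∑ i ∈ Finset.range n, stp σ (i+1) * lo σ k (i+1))
        - ∑ i ∈ Finset.range n, stp σ i * lo σ k (i+1) := by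
        rw [← Finset.sum_sub_distrib]
        exact Finset.sum_congr rfl fun i _ => by ring
    _ = ((∑ j ∈ Finset.range (n+1), stp σ j * lo σ k j) - stp σ 0 * lo σ k 0)
        - ((∑ j ∈ Finset.range (n+1), stp σ j * lo σ k (j+1)) - stp σ n * lo σ k (n+1)) := by
        rw [Finset.sum_range_succ' (fun j => stp σ j * lo σ k j) n,
            Finset.sum_range_succ (fun j => stp σ j * lo σ k (j+1)) n]
        ring
    _ = (∑ j ∈ Finset.range (n+1), stp σ j * (lo σ k j - lo σ k (j+1))) - 1 := by
        simp only [mul_sub, Finset.sum_sub_distrib, stp_zero, lo_zero, lo_top σ hk]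
        ring

lemma edge_abs (σ : Equiv.Perm (Fin n)) (k j : ℕ) :
    stp σ j * (lo σ k j - lo σ k (j+1)) = |lo σ k j - lo σ k (j+1)| := by
  simp only [stp, lo]
  by_cases h1 : extPerm σ j ≤ k <;> by_cases h2 : extPerm σ (j+1) ≤ k
  · simp [h1, h2]
  · rw [if_pos (by omega), if_pos h1, if_neg h2]
    norm_num
  · rw [if_neg (by omega), if_neg h1, if_pos h2]
    norm_num
  · simp [h1, h2]

lemma B_eq (σ : Equiv.Perm (Fin n)) {k : ℕ} (hk : k ≤ n) :
    B σ (2*k) = (∑ j ∈ Finset.range (n+1), |lo σ k j - lo σ k (j+1)|) - 1 := by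
  rw [B_even σ k hk, B_reindex σ hk, B_abel σ hk]
  congr 1
  exact Finset.sum_congr rfl fun j _ => edge_abs σ k j

lemma sum_lo (σ : Equiv.Perm (Fin n)) {k : ℕ} (hk : k ≤ n) :
    ∑ j ∈ Finset.range (n+1), (lo σ k j - lo σ k (j+1)) = 1 := by
  rw [Finset.sum_range_sub' (fun j => lo σ k j), lo_zero, lo_top σ hk]
  ring

lemma B_even_nonneg (σ : Equiv.Perm (Fin n)) {k : ℕ} (hk : k ≤ n) : 0 ≤ B σ (2*k) := by
  rw [B_eq σ hk]
  have h1 := sum_lo σ hk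
  have h2 : ∑ j ∈ Finset.range (n+1), (lo σ k j - lo σ k (j+1))
      ≤ ∑ j ∈ Finset.range (n+1), |lo σ k j - lo σ k (j+1)| :=
    Finset.sum_le_sum fun j _ => le_abs_self _
  linarith

lemma B_final (σ : Equiv.Perm (Fin n)) : B σ (2*n) = 0 := by
  rw [B_eq σ le_rfl, Finset.sum_range_succ]
  have h1 : ∀ j ∈ Finset.range n, |lo σ n j - lo σ n (j+1)| = 0 := by
    intro j hj
    simp only [Finset.mem_range] at hj
    have hj1 : lo σ n j = 1 := by
      rw [lo, if_pos]
      rcases Nat.eq_zero_or_pos j with rfl | h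
      · rw [e_zero]; omega
      · exact (e_rng σ h (by omega)).2
    have hj2 : lo σ n (j+1) = 1 := by
      rw [lo, if_pos]
      exact (e_rng σ (by omega) (by omega)).2
    rw [hj1, hj2]
    simp
  have h2 : ∑ j ∈ Finset.range n, |lo σ n j - lo σ n (j+1)| = 0 := by
    rw [Finset.sum_congr rfl h1]
    simp
  rw [h2]
  have hn1 : lo σ n n = 1 := by
    rw [lo, if_pos]
    rcases Nat.eq_zero_or_pos n with rfl | h
    · rw [e_zero]
    · exact (e_rng σ h le_rfl).2
  rw [hn1, lo_top σ le_rfl]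
  norm_num

lemma B_odd_nonneg (σ : Equiv.Perm (Fin n)) {k : ℕ} (hk : k < n) : 0 ≤ B σ (2*k+1) := by
  have hB : B σ (2*k+1) = B σ (2*k) + stp σ (posOf σ (k+1)) := by
    rw [B, Finset.sum_range_succ, ← B, pstep_even]
  obtain ⟨hq1, hq2, hqe⟩ := q_spec σ (v := k+1) (by omega) (by omega)
  set p := posOf σ (k+1) with hp
  by_cases hs : extPerm σ p < extPerm σ (p+1)
  · have hstp : stp σ p = 1 := by rw [stp, if_pos hs]
    have hnn := B_even_nonneg σ (k := k) (by omega)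
    omega
  · have hstp : stp σ p = -1 := by rw [stp, if_neg hs]
    have hadj : extPerm σ p ≠ extPerm σ (p+1) := e_adj σ (by omega)
    have hlt : extPerm σ (p+1) ≤ k := by omega
    have hlop : lo σ k p = 0 := by rw [lo, if_neg (by omega)]
    have hlop1 : lo σ k (p+1) = 1 := by rw [lo, if_pos hlt]
    have hmem : p ∈ Finset.range (n+1) := by
      simp only [Finset.mem_range]; omega
    have hsplit := Finset.add_sum_erase _ (fun j => |lo σ k j - lo σ k (j+1)|) hmem
    have habs : |∑ j ∈ (Finset.range (n+1)).erase p, (lo σ k j - lo σ k (j+1))|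
        ≤ ∑ j ∈ (Finset.range (n+1)).erase p, |lo σ k j - lo σ k (j+1)| :=
      Finset.abs_sum_le_sum_abs _ _
    have hsum_erase := Finset.add_sum_erase _ (fun j => lo σ k j - lo σ k (j+1)) hmem
    have hsum := sum_lo σ (k := k) (by omega)
    have hdp : lo σ k p - lo σ k (p+1) = -1 := by rw [hlop, hlop1]; norm_num
    have hdpabs : |lo σ k p - lo σ k (p+1)| = 1 := by rw [hdp]; norm_num
    have h2 : ∑ j ∈ (Finset.range (n+1)).erase p, (lo σ k j - lo σ k (j+1)) = 2 := by
      linarith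
    have h3 : (2:ℤ) ≤ ∑ j ∈ (Finset.range (n+1)).erase p, |lo σ k j - lo σ k (j+1)| := by
      rw [h2] at habs
      simpa using habs
    have hT : 3 ≤ ∑ j ∈ Finset.range (n+1), |lo σ k j - lo σ k (j+1)| := by
      linarith
    have hBe := B_eq σ (k := k) (by omega : k ≤ n)
    linarith

lemma count_take (σ : Equiv.Perm (Fin n)) : ∀ m : ℕ,
    ((((List.range m).map (pfun σ)).count true : ℤ)
      - (((List.range m).map (pfun σ)).count false : ℤ) = B σ m)
    ∧ (((List.range m).map (pfun σ)).count true
      + ((List.range m).map (pfun σ)).count false = m) := by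
  intro m
  induction m with
  | zero => simp [B]
  | succ m ih =>
    obtain ⟨ih1, ih2⟩ := ih
    have hB : B σ (m+1) = B σ m + pstep σ m := by
      rw [B, Finset.sum_range_succ, ← B]
    rw [List.range_succ, List.map_append, List.count_append, List.count_append]
    simp only [List.map_cons, List.map_nil]
    by_cases h : pfun σ m
    · have h1 : ([pfun σ m].count true) = 1 := by simp [h]
      have h2 : ([pfun σ m].count false) = 0 := by simp [h]
      have h3 : pstep σ m = 1 := by rw [pstep, if_pos h]
      rw [h1, h2]
      constructor
      · push_cast; omega
      · omega
    · have h1 : ([pfun σ m].count true) = 0 := by simp [h]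
      have h2 : ([pfun σ m].count false) = 1 := by simp [h]
      have h3 : pstep σ m = -1 := by rw [pstep, if_neg h]
      rw [h1, h2]
      constructor
      · push_cast; omega
      · omega

end ProfileDyck

open ProfileDyck

/-- For every permutation `σ` of `{1, …, n}` (with `σ₀ = 0`, `σ_{n+1} = n+1`),
the profile word `Δ(σ)` is a Dyck path of length `2n`. -/
theorem profile_isDyck {n : ℕ} (σ : Equiv.Perm (Fin n)) :
    IsDyck (profile σ) ∧ (profile σ).length = 2 * n := by
  have hprof : profile σ = (List.range (2*n)).map (pfun σ) := rfl
  have hlen : (profile σ).length = 2*n := by rw [hprof]; simp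
  refine ⟨⟨?_, ?_⟩, hlen⟩
  · intro p
    have htake : (profile σ).take p = (List.range (min p (2*n))).map (pfun σ) := by
      rw [hprof, ← List.map_take, List.take_range]
    rw [htake]
    have hm2 : min p (2*n) ≤ 2*n := min_le_right _ _
    have hBnn : 0 ≤ B σ (min p (2*n)) := by
      rcases Nat.even_or_odd (min p (2*n)) with ⟨k, hk⟩ | ⟨k, hk⟩
      · rw [show min p (2*n) = 2*k by omega]
        exact B_even_nonneg σ (by omega)
      · rw [show min p (2*n) = 2*k+1 by omega]
        exact B_odd_nonneg σ (by omega)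
    obtain ⟨h1, h2⟩ := count_take σ (min p (2*n))
    omega
  · rw [hprof]
    obtain ⟨h1, h2⟩ := count_take σ (2*n)
    have hf := B_final σ
    rw [hf] at h1
    omega
end

section
/- Let σ ∈ S_n (n ≥ 2) and let σ' ∈ S_{n-1} be the permutation obtained from the one-line word of σ by deleting the value n. Then Δ(σ') ⊏ Δ(σ), i.e., the profile Dyck path of σ is obtained from the profile of σ' by addition of a ribbon: the word Δ(σ) equals Δ(σ') followed by two down steps with exactly one down step (not the last) changed to an up step, or Δ(σ') followed by UD when n is the last entry of σ. -/
/-- The permutation `σ'` obtained from `σ ∈ S_{n+1}` by deleting the largest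
value from its one-line word. -/
noncomputable def delTop {n : ℕ} (σ : Equiv.Perm (Fin (n + 1))) : Equiv.Perm (Fin n) :=
  Equiv.ofBijective
    (fun j => (σ ((σ.symm (Fin.last n)).succAbove j)).castPred
      (fun h => Fin.succAbove_ne (σ.symm (Fin.last n)) j
        (by simpa using congrArg σ.symm h)))
    (Finite.injective_iff_bijective.mp (fun j₁ j₂ h => by
      have h2 := congrArg Fin.castSucc h
      rw [Fin.castSucc_castPred, Fin.castSucc_castPred] at h2
      exact Fin.succAbove_right_injective (σ.injective h2)))

section Basic
variable {m : ℕ} (τ : Equiv.Perm (Fin m))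

lemma extPerm_of_mem (i : ℕ) (h1 : 1 ≤ i) (h2 : i ≤ m) :
    extPerm τ i = ((τ ⟨i - 1, by omega⟩ : Fin m) : ℕ) + 1 := by
  unfold extPerm; rw [dif_pos ⟨h1, h2⟩]

lemma extPerm_zero : extPerm τ 0 = 0 := by simp [extPerm]

lemma extPerm_of_gt (i : ℕ) (h : m < i) : extPerm τ i = m + 1 := by
  unfold extPerm; rw [dif_neg (by omega), if_neg (by omega)]

lemma extPerm_mem (i : ℕ) (h1 : 1 ≤ i) (h2 : i ≤ m) :
    1 ≤ extPerm τ i ∧ extPerm τ i ≤ m := by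
  rw [extPerm_of_mem τ i h1 h2]
  have := (τ ⟨i - 1, by omega⟩).isLt
  omega

lemma posOf_mem (v : ℕ) (h1 : 1 ≤ v) (h2 : v ≤ m) :
    1 ≤ posOf τ v ∧ posOf τ v ≤ m := by
  unfold posOf; rw [dif_pos (by omega)]
  have := (τ.symm ⟨v - 1, by omega⟩).isLt
  omega

lemma posOf_eq (v : ℕ) (h : v - 1 < m) :
    posOf τ v = ((τ.symm ⟨v - 1, h⟩ : Fin m) : ℕ) + 1 := dif_pos h

lemma extPerm_posOf (v : ℕ) (h1 : 1 ≤ v) (h2 : v ≤ m) :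
    extPerm τ (posOf τ v) = v := by
  obtain ⟨hq1, hq2⟩ := posOf_mem τ v h1 h2
  rw [posOf_eq τ v (by omega)] at *
  rw [extPerm_of_mem τ _ hq1 hq2]
  have : (⟨(τ.symm ⟨v - 1, by omega⟩ : Fin m) + 1 - 1, by omega⟩ : Fin m)
      = τ.symm ⟨v - 1, by omega⟩ := by ext; simp
  rw [this, Equiv.apply_symm_apply]
  simp; omega

lemma posOf_eq_of_extPerm (q v : ℕ) (hq1 : 1 ≤ q) (hq2 : q ≤ m)
    (h : extPerm τ q = v) : posOf τ v = q := by
  rw [extPerm_of_mem τ q hq1 hq2] at h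
  have hlt := (τ ⟨q - 1, by omega⟩).isLt
  unfold posOf
  rw [dif_pos (by omega)]
  have : (⟨v - 1, by omega⟩ : Fin m) = τ ⟨q - 1, by omega⟩ := by ext; simp; omega
  rw [this, Equiv.symm_apply_apply]
  simp; omega

lemma extPerm_inj (q1 q2 : ℕ) (h11 : 1 ≤ q1) (h12 : q1 ≤ m) (h21 : 1 ≤ q2)
    (h22 : q2 ≤ m) (h : extPerm τ q1 = extPerm τ q2) : q1 = q2 := by
  have e1 := posOf_eq_of_extPerm τ q1 _ h11 h12 rfl
  have e2 := posOf_eq_of_extPerm τ q2 _ h21 h22 rfl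
  rw [h] at e1; omega

end Basic

section Del
variable {n : ℕ} (σ : Equiv.Perm (Fin (n + 1)))

lemma posOf_top : posOf σ (n + 1) = ((σ.symm (Fin.last n) : Fin (n+1)) : ℕ) + 1 := by
  rw [posOf_eq σ (n+1) (by omega)]
  congr 1

lemma succAbove_val (P : Fin (n+1)) (j : Fin n) :
    ((P.succAbove j : Fin (n+1)) : ℕ) = if (j : ℕ) < (P : ℕ) then (j : ℕ) else (j : ℕ) + 1 := by
  unfold Fin.succAbove
  split
  · rename_i h; rw [if_pos (by simpa [Fin.lt_def] using h)]; simp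
  · rename_i h; rw [if_neg (by simpa [Fin.lt_def] using h)]; simp

lemma delTop_val (j : Fin n) :
    ((delTop σ j : Fin n) : ℕ) = ((σ ((σ.symm (Fin.last n)).succAbove j) : Fin (n+1)) : ℕ) := rfl

lemma extPerm_delTop (i : ℕ) (h1 : 1 ≤ i) (h2 : i ≤ n) :
    extPerm (delTop σ) i =
      if i < posOf σ (n + 1) then extPerm σ i else extPerm σ (i + 1) := by
  rw [extPerm_of_mem (delTop σ) i h1 h2, delTop_val]
  rw [posOf_top]
  set P := σ.symm (Fin.last n) with hP
  split
  · rename_i hlt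
    rw [extPerm_of_mem σ i h1 (by omega)]
    have h : P.succAbove ⟨i - 1, by omega⟩ = (⟨i - 1, by omega⟩ : Fin (n+1)) := by
      ext; rw [succAbove_val]; simp only [Fin.val_mk]; split_ifs <;> omega
    exact congrArg (fun x => ((σ x : Fin (n+1)) : ℕ) + 1) h
  · rename_i hge
    rw [extPerm_of_mem σ (i+1) (by omega) (by omega)]
    have h : P.succAbove ⟨i - 1, by omega⟩ = (⟨i + 1 - 1, by omega⟩ : Fin (n+1)) := by
      ext; rw [succAbove_val]; simp only [Fin.val_mk]; split_ifs <;> omega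
    exact congrArg (fun x => ((σ x : Fin (n+1)) : ℕ) + 1) h

lemma posOf_delTop (v : ℕ) (h1 : 1 ≤ v) (h2 : v ≤ n) :
    posOf (delTop σ) v =
      if posOf σ v < posOf σ (n + 1) then posOf σ v else posOf σ v - 1 := by
  set p := posOf σ (n + 1) with hp
  set q := posOf σ v with hq
  obtain ⟨hq1, hq2⟩ := posOf_mem σ v h1 (by omega)
  obtain ⟨hp1, hp2⟩ := posOf_mem σ (n+1) (by omega) (by omega)
  have hvq : extPerm σ q = v := extPerm_posOf σ v h1 (by omega)
  have hvp : extPerm σ p = n + 1 := extPerm_posOf σ (n+1) (by omega) (by omega)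
  have hne : q ≠ p := by intro h; rw [h, hvp] at hvq; omega
  by_cases hlt : q < p
  · rw [if_pos hlt]
    apply posOf_eq_of_extPerm (delTop σ) q v hq1 (by omega)
    rw [extPerm_delTop σ q hq1 (by omega), ← hp, if_pos hlt, hvq]
  · rw [if_neg hlt]
    apply posOf_eq_of_extPerm (delTop σ) (q-1) v (by omega) (by omega)
    rw [extPerm_delTop σ (q-1) (by omega) (by omega), ← hp, if_neg (by omega)]
    have : q - 1 + 1 = q := by omega
    rw [this, hvq]

end Del

lemma profile_length {m : ℕ} (τ : Equiv.Perm (Fin m)) : (profile τ).length = 2 * m := by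
  simp [profile]

lemma profile_getElem {m : ℕ} (τ : Equiv.Perm (Fin m)) (j : ℕ) (hj : j < 2 * m) :
    (profile τ)[j]'(by rw [profile_length]; exact hj) =
      if j % 2 = 0 then
        decide (extPerm τ (posOf τ (j / 2 + 1)) < extPerm τ (posOf τ (j / 2 + 1) + 1))
      else decide (extPerm τ (posOf τ (j / 2 + 1)) < extPerm τ (posOf τ (j / 2 + 1) - 1)) := by
  simp [profile]

section Bits
variable {n : ℕ} (σ : Equiv.Perm (Fin (n + 1)))

lemma even_bit (v : ℕ) (hv1 : 1 ≤ v) (hv2 : v ≤ n) :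
    decide (extPerm (delTop σ) (posOf (delTop σ) v) <
        extPerm (delTop σ) (posOf (delTop σ) v + 1))
    = decide (v < if posOf σ v + 1 = posOf σ (n + 1) then extPerm σ (posOf σ (n + 1) + 1)
        else extPerm σ (posOf σ v + 1)) := by
  have hv' : extPerm (delTop σ) (posOf (delTop σ) v) = v := extPerm_posOf _ v hv1 hv2
  rw [hv', posOf_delTop σ v hv1 hv2]
  set p := posOf σ (n + 1) with hpdef
  set q := posOf σ v with hqdef
  obtain ⟨hq1, hq2⟩ := posOf_mem σ v hv1 (by omega)
  obtain ⟨hp1, hp2⟩ := posOf_mem σ (n + 1) (by omega) (by omega)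
  by_cases h1 : q < p
  · rw [if_pos h1]
    by_cases h2 : q + 1 = p
    · rw [if_pos h2, h2]
      by_cases h3 : p ≤ n
      · rw [extPerm_delTop σ p (by omega) h3, ← hpdef, if_neg (by omega)]
      · have hp' : p = n + 1 := by omega
        rw [hp', extPerm_of_gt (delTop σ) (n + 1) (by omega),
          extPerm_of_gt σ (n + 1 + 1) (by omega)]
        simp only [decide_eq_decide]; omega
    · rw [if_neg h2, extPerm_delTop σ (q + 1) (by omega) (by omega), ← hpdef,
        if_pos (by omega)]
  · rw [if_neg h1]
    have hq1' : q - 1 + 1 = q := by omega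
    rw [hq1']
    by_cases h3 : q ≤ n
    · rw [extPerm_delTop σ q (by omega) h3, ← hpdef, if_neg h1, if_neg (by omega)]
    · have hq' : q = n + 1 := by omega
      rw [hq', extPerm_of_gt (delTop σ) (n + 1) (by omega), if_neg (by omega),
        extPerm_of_gt σ (n + 1 + 1) (by omega)]
      simp only [decide_eq_decide]; omega

lemma odd_bit (v : ℕ) (hv1 : 1 ≤ v) (hv2 : v ≤ n) :
    decide (extPerm (delTop σ) (posOf (delTop σ) v) <
        extPerm (delTop σ) (posOf (delTop σ) v - 1))
    = decide (v < if posOf σ v - 1 = posOf σ (n + 1) then extPerm σ (posOf σ (n + 1) - 1)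
        else extPerm σ (posOf σ v - 1)) := by
  have hv' : extPerm (delTop σ) (posOf (delTop σ) v) = v := extPerm_posOf _ v hv1 hv2
  rw [hv', posOf_delTop σ v hv1 hv2]
  set p := posOf σ (n + 1) with hpdef
  set q := posOf σ v with hqdef
  obtain ⟨hq1, hq2⟩ := posOf_mem σ v hv1 (by omega)
  obtain ⟨hp1, hp2⟩ := posOf_mem σ (n + 1) (by omega) (by omega)
  have hvq : extPerm σ q = v := extPerm_posOf σ v hv1 (by omega)
  have hvp : extPerm σ p = n + 1 := extPerm_posOf σ (n + 1) (by omega) (by omega)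
  have hne : q ≠ p := by intro h; rw [h, hvp] at hvq; omega
  by_cases h1 : q < p
  · rw [if_pos h1, if_neg (by omega)]
    by_cases h2 : 2 ≤ q
    · rw [extPerm_delTop σ (q - 1) (by omega) (by omega), ← hpdef, if_pos (by omega)]
    · have hq' : q = 1 := by omega
      rw [hq', show (1:ℕ) - 1 = 0 from rfl, extPerm_zero, extPerm_zero]
  · rw [if_neg h1]
    by_cases h2 : q = p + 1
    · rw [if_pos (by omega)]
      by_cases h3 : 2 ≤ p
      · rw [show q - 1 - 1 = p - 1 by omega,
          extPerm_delTop σ (p - 1) (by omega) (by omega), ← hpdef, if_pos (by omega)]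
      · have hp' : p = 1 := by omega
        rw [show q - 1 - 1 = 0 by omega, hp', show (1:ℕ) - 1 = 0 from rfl,
          extPerm_zero, extPerm_zero]
    · rw [if_neg (by omega), show q - 1 - 1 = q - 2 by omega,
        extPerm_delTop σ (q - 2) (by omega) (by omega), ← hpdef, if_neg (by omega),
        show q - 2 + 1 = q - 1 by omega]

end Bits

lemma ribbon_of_pointwise (D E : List Bool) (k : ℕ) (hlen : E.length = D.length + 2)
    (hk : k < D.length + 1)
    (h1 : (D ++ [false, false])[k]'(by simp; omega) = false)
    (h2 : E[k]'(by omega) = true)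
    (h3 : ∀ j (hj : j < E.length), j ≠ k →
      E[j]'hj = (D ++ [false, false])[j]'(by simp; omega)) :
    Ribbon D E := by
  refine ⟨k, hk, ?_, ?_⟩
  · rw [List.getElem?_eq_getElem (by simp; omega), h1]
  · apply List.ext_getElem (by simp [hlen])
    intro j hj1 hj2
    rw [List.getElem_set]
    split
    · rename_i hjk
      subst hjk
      exact h2
    · exact h3 j hj1 (by omega)

lemma getElem_appFF (D : List Bool) (j : ℕ) (hj : j < D.length + 2) :
    (D ++ [false, false])[j]'(by simp; omega) =
      if hj' : j < D.length then D[j]'hj' else false := by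
  split
  · exact List.getElem_append_left _
  · rw [List.getElem_append_right (by omega)]
    have : j - D.length = 0 ∨ j - D.length = 1 := by omega
    rcases this with h | h <;> simp [h]


/-- For `σ ∈ S_{n+1}` with `n + 1 ≥ 2`, the profile of `σ` is obtained from
the profile of `σ'` (deletion of the largest value) by addition of a ribbon:
`Δ(σ') ⊏ Δ(σ)`. -/
theorem profile_delTop_ribbon {n : ℕ} (hn : 1 ≤ n) (σ : Equiv.Perm (Fin (n + 1))) :
    Ribbon (profile (delTop σ)) (profile σ) := by
  obtain ⟨p, hpdef⟩ : ∃ p, posOf σ (n + 1) = p := ⟨_, rfl⟩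
  have hlenD : (profile (delTop σ)).length = 2 * n := profile_length _
  have hlenE : (profile σ).length = 2 * (n + 1) := profile_length _
  have hpm := posOf_mem σ (n + 1) (by omega) (by omega)
  rw [hpdef] at hpm
  obtain ⟨hp1, hp2⟩ := hpm
  have hvp : extPerm σ p = n + 1 := by
    rw [← hpdef]; exact extPerm_posOf σ (n + 1) (by omega) (by omega)
  have hub : ∀ q, q ≤ n + 1 → q ≠ p → extPerm σ q ≤ n := by
    intro q hq hne
    rcases Nat.eq_zero_or_pos q with h0 | h0
    · rw [h0, extPerm_zero]; omega
    · obtain ⟨l, u⟩ := extPerm_mem σ q h0 hq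
      by_contra hc
      have := posOf_eq_of_extPerm σ q (n + 1) h0 hq (by omega)
      rw [hpdef] at this; omega
  have hfact : ∀ v, 1 ≤ v → v ≤ n →
      extPerm σ (posOf σ v) = v ∧ 1 ≤ posOf σ v ∧ posOf σ v ≤ n + 1 ∧ posOf σ v ≠ p := by
    intro v h1 h2
    obtain ⟨hq1, hq2⟩ := posOf_mem σ v h1 (by omega)
    have he := extPerm_posOf σ v h1 (by omega)
    refine ⟨he, hq1, hq2, ?_⟩
    intro hc
    rw [hc, hvp] at he; omega
  have hE2n : (profile σ)[2 * n]'(by omega) = decide (n + 1 < extPerm σ (p + 1)) := by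
    rw [profile_getElem σ (2 * n) (by omega), if_pos (by omega),
      show 2 * n / 2 + 1 = n + 1 by omega, hpdef, hvp]
  have hE2n1 : (profile σ)[2 * n + 1]'(by omega) = decide (n + 1 < extPerm σ (p - 1)) := by
    rw [profile_getElem σ (2 * n + 1) (by omega), if_neg (by omega),
      show (2 * n + 1) / 2 + 1 = n + 1 by omega, hpdef, hvp]
  have hDbit : ∀ j (hj : j < 2 * n),
      (profile (delTop σ))[j]'(by omega) =
        if j % 2 = 0 then
          decide (j / 2 + 1 < if posOf σ (j / 2 + 1) + 1 = p then extPerm σ (p + 1)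
            else extPerm σ (posOf σ (j / 2 + 1) + 1))
        else
          decide (j / 2 + 1 < if posOf σ (j / 2 + 1) - 1 = p then extPerm σ (p - 1)
            else extPerm σ (posOf σ (j / 2 + 1) - 1)) := by
    intro j hj
    rw [profile_getElem (delTop σ) j hj]
    by_cases hpar : j % 2 = 0
    · rw [if_pos hpar, if_pos hpar, even_bit σ (j / 2 + 1) (by omega) (by omega), hpdef]
    · rw [if_neg hpar, if_neg hpar, odd_bit σ (j / 2 + 1) (by omega) (by omega), hpdef]
  have hEbit : ∀ j (hj : j < 2 * n),
      (profile σ)[j]'(by omega) =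
        if j % 2 = 0 then decide (j / 2 + 1 < extPerm σ (posOf σ (j / 2 + 1) + 1))
        else decide (j / 2 + 1 < extPerm σ (posOf σ (j / 2 + 1) - 1)) := by
    intro j hj
    rw [profile_getElem σ j (by omega),
      extPerm_posOf σ (j / 2 + 1) (by omega) (by omega)]
  by_cases hptop : p = n + 1
  · apply ribbon_of_pointwise _ _ (2 * n) (by omega) (by omega) ?_ ?_ ?_
    · rw [getElem_appFF _ _ (by omega), dif_neg (by omega)]
    · rw [hE2n, hptop, extPerm_of_gt σ (n + 1 + 1) (by omega)]
      exact decide_eq_true (by omega)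
    · intro j hj hne
      rw [hlenE] at hj
      rw [getElem_appFF _ _ (by omega)]
      by_cases hj2 : j < 2 * n
      · rw [dif_pos (show j < (profile (delTop σ)).length by omega), hEbit j hj2, hDbit j hj2]
        obtain ⟨hq, hq1, hq2, hqp⟩ := hfact (j / 2 + 1) (by omega) (by omega)
        by_cases hpar : j % 2 = 0
        · rw [if_pos hpar, if_pos hpar]
          by_cases hc : posOf σ (j / 2 + 1) + 1 = p
          · rw [if_pos hc, hc, hvp, hptop, extPerm_of_gt σ (n + 1 + 1) (by omega)]
            simp only [decide_eq_decide]; omega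
          · rw [if_neg hc]
        · rw [if_neg hpar, if_neg hpar, if_neg (by omega)]
      · have hj' : j = 2 * n + 1 := by omega
        subst hj'
        rw [dif_neg (by omega), hE2n1]
        exact decide_eq_false (by have := hub (p - 1) (by omega) (by omega); omega)
  · have hple : p ≤ n := by omega
    have hbmem : 1 ≤ extPerm σ (p + 1) ∧ extPerm σ (p + 1) ≤ n :=
      ⟨(extPerm_mem σ (p + 1) (by omega) (by omega)).1, hub (p + 1) (by omega) (by omega)⟩
    obtain ⟨hb1, hb2⟩ := hbmem
    have hqb : posOf σ (extPerm σ (p + 1)) = p + 1 :=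
      posOf_eq_of_extPerm σ (p + 1) _ (by omega) (by omega) rfl
    have hane : extPerm σ (p - 1) ≤ n := hub (p - 1) (by omega) (by omega)
    by_cases hab : extPerm σ (p - 1) < extPerm σ (p + 1)
    · apply ribbon_of_pointwise _ _ (2 * extPerm σ (p + 1) - 1) (by omega) (by omega) ?_ ?_ ?_
      · rw [getElem_appFF _ _ (by omega), dif_pos (by omega),
          hDbit _ (by omega), if_neg (by omega),
          show (2 * extPerm σ (p + 1) - 1) / 2 + 1 = extPerm σ (p + 1) by omega, hqb,
          if_pos (by omega)]
        exact decide_eq_false (by omega)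
      · rw [hEbit _ (by omega), if_neg (by omega),
          show (2 * extPerm σ (p + 1) - 1) / 2 + 1 = extPerm σ (p + 1) by omega, hqb,
          show p + 1 - 1 = p by omega, hvp]
        exact decide_eq_true (by omega)
      · intro j hj hne
        rw [hlenE] at hj
        rw [getElem_appFF _ _ (by omega)]
        by_cases hj2 : j < 2 * n
        · rw [dif_pos (show j < (profile (delTop σ)).length by omega), hEbit j hj2, hDbit j hj2]
          obtain ⟨hq, hq1, hq2, hqp⟩ := hfact (j / 2 + 1) (by omega) (by omega)
          by_cases hpar : j % 2 = 0
          · rw [if_pos hpar, if_pos hpar]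
            by_cases hc : posOf σ (j / 2 + 1) + 1 = p
            · have hva : j / 2 + 1 = extPerm σ (p - 1) := by
                rw [← hq, show posOf σ (j / 2 + 1) = p - 1 by omega]
              rw [if_pos hc, hc, hvp, hva]
              simp only [decide_eq_decide]; omega
            · rw [if_neg hc]
          · rw [if_neg hpar, if_neg hpar]
            by_cases hc : posOf σ (j / 2 + 1) - 1 = p
            · exfalso
              have hvb : j / 2 + 1 = extPerm σ (p + 1) := by
                rw [← hq, show posOf σ (j / 2 + 1) = p + 1 by omega]
              omega
            · rw [if_neg hc]
        · rw [dif_neg (by omega)]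
          have : j = 2 * n ∨ j = 2 * n + 1 := by omega
          rcases this with h | h <;> subst h
          · rw [hE2n]; exact decide_eq_false (by omega)
          · rw [hE2n1]; exact decide_eq_false (by omega)
    · have hp2' : 2 ≤ p := by
        by_contra hc
        have hp1' : p = 1 := by omega
        have h0 : extPerm σ (p - 1) = 0 := by
          rw [hp1', show (1:ℕ) - 1 = 0 from rfl, extPerm_zero]
        omega
      have ham : 1 ≤ extPerm σ (p - 1) := (extPerm_mem σ (p - 1) (by omega) (by omega)).1
      have hanb : extPerm σ (p - 1) ≠ extPerm σ (p + 1) := by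
        intro hc
        have := extPerm_inj σ (p - 1) (p + 1) (by omega) (by omega) (by omega) (by omega) hc
        omega
      have hba : extPerm σ (p + 1) < extPerm σ (p - 1) := by omega
      have hqa : posOf σ (extPerm σ (p - 1)) = p - 1 :=
        posOf_eq_of_extPerm σ (p - 1) _ (by omega) (by omega) rfl
      apply ribbon_of_pointwise _ _ (2 * extPerm σ (p - 1) - 2) (by omega) (by omega) ?_ ?_ ?_
      · rw [getElem_appFF _ _ (by omega), dif_pos (by omega),
          hDbit _ (by omega), if_pos (by omega),
          show (2 * extPerm σ (p - 1) - 2) / 2 + 1 = extPerm σ (p - 1) by omega, hqa,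
          if_pos (by omega)]
        exact decide_eq_false (by omega)
      · rw [hEbit _ (by omega), if_pos (by omega),
          show (2 * extPerm σ (p - 1) - 2) / 2 + 1 = extPerm σ (p - 1) by omega, hqa,
          show p - 1 + 1 = p by omega, hvp]
        exact decide_eq_true (by omega)
      · intro j hj hne
        rw [hlenE] at hj
        rw [getElem_appFF _ _ (by omega)]
        by_cases hj2 : j < 2 * n
        · rw [dif_pos (show j < (profile (delTop σ)).length by omega), hEbit j hj2, hDbit j hj2]
          obtain ⟨hq, hq1, hq2, hqp⟩ := hfact (j / 2 + 1) (by omega) (by omega)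
          by_cases hpar : j % 2 = 0
          · rw [if_pos hpar, if_pos hpar]
            by_cases hc : posOf σ (j / 2 + 1) + 1 = p
            · exfalso
              have hva : j / 2 + 1 = extPerm σ (p - 1) := by
                rw [← hq, show posOf σ (j / 2 + 1) = p - 1 by omega]
              omega
            · rw [if_neg hc]
          · rw [if_neg hpar, if_neg hpar]
            by_cases hc : posOf σ (j / 2 + 1) - 1 = p
            · have hvb : j / 2 + 1 = extPerm σ (p + 1) := by
                rw [← hq, show posOf σ (j / 2 + 1) = p + 1 by omega]
              rw [if_pos hc, hc, hvp, hvb]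
              simp only [decide_eq_decide]; omega
            · rw [if_neg hc]
        · rw [dif_neg (by omega)]
          have : j = 2 * n ∨ j = 2 * n + 1 := by omega
          rcases this with h | h <;> subst h
          · rw [hE2n]; exact decide_eq_false (by omega)
          · rw [hE2n1]; exact decide_eq_false (by omega)
end

section
/- The number of Laguerre histories of length 2n is n!, where a Laguerre history of shape D (D a Dyck path of length 2n) is a function assigning to each up step of D from height h to h+1 an integer in {1, ..., ⌊h/2⌋+1}. -/
/-- The height of the path `w` after `i` steps. -/
def hgt (w : List Bool) (i : ℕ) : ℤ :=
  ((w.take i).count true : ℤ) - ((w.take i).count false : ℤ)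

open Finset
open scoped Nat

section RestrictedFunctions

variable {α : Type*}

def forallMemEquivPiFin (C : ℕ → Finset α) (L : ℕ) (a : α) (hC : ∀ i, L ≤ i → C i = {a}) :
    {f : ℕ → α // ∀ i, f i ∈ C i} ≃ ((i : Fin L) → C i) where
  toFun f i := ⟨f.1 i, f.2 i⟩
  invFun g := ⟨fun i => if h : i < L then g ⟨i, h⟩ else a, fun i => by
    by_cases h : i < L
    · simp [h]
    · simp [h, hC i (not_lt.mp h)]⟩
  left_inv f := by
    ext i
    by_cases h : i < L
    · simp [h]
    · have hfi := f.2 i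
      rw [hC i (not_lt.mp h), mem_singleton] at hfi
      simp [h, hfi]
  right_inv g := by
    ext i
    simp

theorem finite_setOf_forall_mem (C : ℕ → Finset α) (L : ℕ) (a : α)
    (hC : ∀ i, L ≤ i → C i = {a}) : {f : ℕ → α | ∀ i, f i ∈ C i}.Finite :=
  Set.finite_coe_iff.mp ((forallMemEquivPiFin C L a hC).finite_iff.mpr inferInstance)

theorem ncard_setOf_forall_mem (C : ℕ → Finset α) (L : ℕ) (a : α)
    (hC : ∀ i, L ≤ i → C i = {a}) :
    {f : ℕ → α | ∀ i, f i ∈ C i}.ncard = ∏ i ∈ range L, #(C i) := by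
  rw [← Nat.card_coe_set_eq, Set.coe_ofPred, Nat.card_congr (forallMemEquivPiFin C L a hC),
    Nat.card_pi, ← Fin.prod_univ_eq_prod_range]
  simp

end RestrictedFunctions

theorem ncard_setOf_fst_mem_snd_mem {α β : Type*} (s : Finset α) (t : α → Set β)
    (ht : ∀ a ∈ s, (t a).Finite) :
    {p : α × β | p.1 ∈ s ∧ p.2 ∈ t p.1}.ncard = ∑ a ∈ s, (t a).ncard := by
  have hunion : {p : α × β | p.1 ∈ s ∧ p.2 ∈ t p.1} = ⋃ a ∈ (s : Set α), Prod.mk a '' t a := by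
    ext ⟨a, b⟩
    simp [and_comm]
  have hdisj : (s : Set α).PairwiseDisjoint fun a => Prod.mk a '' t a := by
    intro a _ a' _ hne
    simp only [Function.onFun, Set.disjoint_left, Set.mem_image]
    rintro _ ⟨b, -, rfl⟩ ⟨b', -, h⟩
    exact hne (congrArg Prod.fst h).symm
  rw [hunion, s.finite_toSet.ncard_biUnion (fun a ha => (ht a ha).image _) hdisj,
    finsum_mem_coe_finset]
  exact sum_congr rfl fun a _ => Set.ncard_image_of_injective _ (Prod.mk_right_injective a)

def IsBallot (w : List Bool) : Prop :=
  ∀ p : ℕ, (w.take p).count false ≤ (w.take p).count true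

theorem IsBallot.count_false_le {w : List Bool} (hw : IsBallot w) :
    w.count false ≤ w.count true := by
  simpa using hw w.length

theorem isBallot_append_singleton {u : List Bool} {b : Bool} :
    IsBallot (u ++ [b]) ↔ IsBallot u ∧ (u ++ [b]).count false ≤ (u ++ [b]).count true := by
  refine ⟨fun h => ⟨fun p => ?_, h.count_false_le⟩, fun ⟨hu, hub⟩ p => ?_⟩
  all_goals rcases le_or_gt p u.length with hp | hp
  · simpa [List.take_append_of_le_length hp] using h p
  · simpa [List.take_of_length_le hp.le] using h u.length
  · simpa [List.take_append_of_le_length hp] using hu p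
  · rwa [List.take_of_length_le (by simp; omega)]

open Classical in
/-- Ballot paths of length `m` ending at height `k`. -/
noncomputable def ballotPaths (m k : ℕ) : Finset (List Bool) :=
  (List.finite_length_eq Bool m).toFinset.filter
    fun w => IsBallot w ∧ w.count true = w.count false + k

theorem mem_ballotPaths {m k : ℕ} {w : List Bool} :
    w ∈ ballotPaths m k ↔ w.length = m ∧ IsBallot w ∧ w.count true = w.count false + k := by
  simp [ballotPaths]

theorem append_false_mem_ballotPaths {m k : ℕ} {u : List Bool} :
    u ++ [false] ∈ ballotPaths (m + 1) k ↔ u ∈ ballotPaths m (k + 1) := by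
  simp only [mem_ballotPaths, isBallot_append_singleton, List.length_append, List.count_append,
    List.count_singleton]
  grind

theorem append_true_mem_ballotPaths {m k : ℕ} {u : List Bool} :
    u ++ [true] ∈ ballotPaths (m + 1) (k + 1) ↔ u ∈ ballotPaths m k := by
  simp only [mem_ballotPaths, isBallot_append_singleton, List.length_append, List.count_append,
    List.count_singleton]
  grind

theorem append_true_not_mem_ballotPaths_zero (m : ℕ) (u : List Bool) :
    u ++ [true] ∉ ballotPaths (m + 1) 0 := by
  simp only [mem_ballotPaths, isBallot_append_singleton, List.length_append, List.count_append,
    List.count_singleton]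
  grind [IsBallot.count_false_le]

theorem mem_ballotPaths_zero {m : ℕ} {w : List Bool} :
    w ∈ ballotPaths m 0 ↔ IsDyck w ∧ w.length = m := by
  rw [mem_ballotPaths, IsDyck, add_zero, eq_comm (a := w.count true)]
  exact ⟨fun ⟨hl, hb, hc⟩ => ⟨⟨hb, hc⟩, hl⟩, fun ⟨⟨hb, hc⟩, hl⟩ => ⟨hl, hb, hc⟩⟩

theorem ballotPaths_succ_zero (m : ℕ) :
    ballotPaths (m + 1) 0 = (ballotPaths m 1).image (· ++ [false]) := by
  ext w
  rcases w.eq_nil_or_concat' with rfl | ⟨u, _ | _, rfl⟩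
  · simp [mem_ballotPaths]
  · simp [append_false_mem_ballotPaths]
  · simp [append_true_not_mem_ballotPaths_zero]

theorem ballotPaths_succ_succ (m k : ℕ) :
    ballotPaths (m + 1) (k + 1) =
      (ballotPaths m (k + 2)).image (· ++ [false]) ∪ (ballotPaths m k).image (· ++ [true]) := by
  ext w
  rcases w.eq_nil_or_concat' with rfl | ⟨u, _ | _, rfl⟩
  · simp [mem_ballotPaths]
  · simp [append_false_mem_ballotPaths]
  · simp [append_true_mem_ballotPaths]

/-- The admissible labels of step `i` of `w`: `{1, …, ⌊h/2⌋ + 1}` for an up step from height `h`,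
and `{0}` for a down step or past the end of the path. -/
def choices (w : List Bool) (i : ℕ) : Finset ℕ :=
  if w[i]? = some true then Icc 1 (hgt w i / 2 + 1).toNat else {0}

def weight (w : List Bool) : ℕ := ∏ i ∈ range w.length, #(choices w i)

theorem choices_append_of_lt {u v : List Bool} {i : ℕ} (hi : i < u.length) :
    choices (u ++ v) i = choices u i := by
  simp [choices, hgt, List.getElem?_append_left hi, List.take_append_of_le_length hi.le]

theorem weight_append_singleton (u : List Bool) (b : Bool) :
    weight (u ++ [b]) = weight u * #(choices (u ++ [b]) u.length) := by
  rw [weight, List.length_append, List.length_singleton, prod_range_succ, weight]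
  congr 1
  exact prod_congr rfl fun i hi => by rw [choices_append_of_lt (mem_range.mp hi)]

theorem weight_append_false (u : List Bool) : weight (u ++ [false]) = weight u := by
  simp [weight_append_singleton, choices]

theorem weight_append_true (u : List Bool) :
    weight (u ++ [true]) = weight u * ((u.count true - u.count false : ℤ) / 2 + 1).toNat := by
  simp [weight_append_singleton, choices, hgt]

theorem choices_of_length_le {w : List Bool} {i : ℕ} (h : w.length ≤ i) : choices w i = {0} := by
  simp [choices, List.getElem?_eq_none h]

theorem forall_mem_choices_iff {w : List Bool} {f : ℕ → ℕ} :
    (∀ i, f i ∈ choices w i) ↔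
      (∀ i, w[i]? = some true → 1 ≤ f i ∧ (f i : ℤ) ≤ hgt w i / 2 + 1) ∧
        (∀ i, ¬w[i]? = some true → f i = 0) := by
  refine ⟨fun h => ⟨fun i hi => ?_, fun i hi => ?_⟩, fun ⟨hup, hdown⟩ i => ?_⟩
  · have := h i
    simp only [choices, if_pos hi, mem_Icc] at this
    omega
  · simpa [choices, hi] using h i
  · by_cases hi : w[i]? = some true
    · simp only [choices, if_pos hi, mem_Icc]
      have := hup i hi
      omega
    · simpa [choices, hi] using hdown i hi

theorem ncard_setOf_forall_mem_choices (w : List Bool) :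
    {f : ℕ → ℕ | ∀ i, f i ∈ choices w i}.ncard = weight w :=
  ncard_setOf_forall_mem _ _ 0 fun _ => choices_of_length_le

/-- The number of Laguerre histories of ballot paths of length `m` ending at height `k`. -/
noncomputable def historyCount (m k : ℕ) : ℕ := ∑ w ∈ ballotPaths m k, weight w

theorem historyCount_zero_zero : historyCount 0 0 = 1 := by
  have : ballotPaths 0 0 = {[]} := by
    ext w
    simp +contextual [mem_ballotPaths, List.length_eq_zero_iff, IsBallot]
  simp [historyCount, this, weight]

theorem historyCount_eq_zero_of_lt {m k : ℕ} (h : m < k) : historyCount m k = 0 := by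
  refine sum_eq_zero fun w hw => absurd hw ?_
  rw [mem_ballotPaths]
  rintro ⟨rfl, -, hc⟩
  have := w.count_le_length (a := true)
  omega

theorem historyCount_succ_zero (m : ℕ) : historyCount (m + 1) 0 = historyCount m 1 := by
  rw [historyCount, ballotPaths_succ_zero,
    sum_image fun _ _ _ _ => List.append_cancel_right]
  simp [historyCount, weight_append_false]

theorem historyCount_succ_succ (m k : ℕ) :
    historyCount (m + 1) (k + 1) = historyCount m (k + 2) + (k / 2 + 1) * historyCount m k := by
  have hdisj : Disjoint ((ballotPaths m (k + 2)).image (· ++ [false]))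
      ((ballotPaths m k).image (· ++ [true])) := by
    simp [disjoint_left]
  rw [historyCount, ballotPaths_succ_succ, sum_union hdisj,
    sum_image fun _ _ _ _ => List.append_cancel_right,
    sum_image fun _ _ _ _ => List.append_cancel_right, historyCount, historyCount, mul_sum]
  congr 1
  · simp [weight_append_false]
  · refine sum_congr rfl fun u hu => ?_
    obtain ⟨-, -, hc⟩ := mem_ballotPaths.mp hu
    rw [weight_append_true, hc, mul_comm]
    congr 1
    omega

theorem historyCount_mul_factorial (m : ℕ) :
    ∀ d, 2 * d ≤ m → historyCount m (m - 2 * d) * d ! = ((m + 1) / 2)! * (m / 2)! := by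
  induction m with
  | zero =>
    intro d hd
    obtain rfl : d = 0 := by omega
    simp [historyCount_zero_zero]
  | succ m ih =>
    intro d hd
    set P := ((m + 1) / 2)! * (m / 2)!
    have hP : ((m + 1 + 1) / 2)! * ((m + 1) / 2)! = (m / 2 + 1) * P := by
      rw [show (m + 1 + 1) / 2 = m / 2 + 1 by omega, Nat.factorial_succ]
      ring
    rw [hP]
    rcases d with _ | e
    · have hm := ih 0 (Nat.zero_le _)
      rw [Nat.sub_zero, Nat.factorial_zero, mul_one] at hm ⊢
      rw [historyCount_succ_succ, historyCount_eq_zero_of_lt (by omega), hm, zero_add]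
    obtain hm | hm : 2 * e + 2 ≤ m ∨ m = 2 * e + 1 := by omega
    · have h₁ := ih e (by omega)
      have h₂ := ih (e + 1) hm
      obtain ⟨j, hj⟩ : ∃ j, m - 2 * (e + 1) = j := ⟨_, rfl⟩
      rw [show m + 1 - 2 * (e + 1) = j + 1 by omega, historyCount_succ_succ,
        show j + 2 = m - 2 * e by omega, Nat.factorial_succ]
      rw [hj] at h₂
      calc (historyCount m (m - 2 * e) + (j / 2 + 1) * historyCount m j) * ((e + 1) * e !)
          = (e + 1) * (historyCount m (m - 2 * e) * e !)
            + (j / 2 + 1) * (historyCount m j * (e + 1)!) := by rw [Nat.factorial_succ]; ring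
        _ = (m / 2 + 1) * P := by
          rw [h₁, h₂, ← add_mul]
          congr 1
          omega
    · have h₁ := ih e (by omega)
      have hm1 : historyCount m 1 = historyCount m (m - 2 * e) := by congr 1; omega
      rw [show m + 1 - 2 * (e + 1) = 0 by omega, historyCount_succ_zero, hm1, Nat.factorial_succ,
        mul_left_comm, h₁]
      congr 1
      omega

theorem historyCount_dyck (n : ℕ) : historyCount (2 * n) 0 = n ! := by
  have h := historyCount_mul_factorial (2 * n) n le_rfl
  rw [Nat.sub_self, show (2 * n + 1) / 2 = n by omega, show 2 * n / 2 = n by omega] at h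
  exact Nat.eq_of_mul_eq_mul_right n.factorial_pos h

/-- A Laguerre history of length `2n` is a Dyck path `D` of length `2n`
together with an assignment, to each up step of `D` starting at height `h`, of
an integer in `{1, …, ⌊h/2⌋ + 1}`.  The total number of Laguerre histories of
length `2n` is `n!`. -/
theorem card_laguerre_histories (n : ℕ) :
    {p : List Bool × (ℕ → ℕ) |
      IsDyck p.1 ∧ p.1.length = 2 * n ∧
      (∀ i : ℕ, p.1[i]? = some true →
        1 ≤ p.2 i ∧ (p.2 i : ℤ) ≤ hgt p.1 i / 2 + 1) ∧
      (∀ i : ℕ, ¬p.1[i]? = some true → p.2 i = 0)}.ncard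
      = Nat.factorial n := by
  calc _ = ∑ w ∈ ballotPaths (2 * n) 0, {f : ℕ → ℕ | ∀ i, f i ∈ choices w i}.ncard := by
        rw [← ncard_setOf_fst_mem_snd_mem _ _
          fun _ _ => finite_setOf_forall_mem _ _ 0 fun _ => choices_of_length_le]
        congr 1
        ext p
        simp only [Set.mem_ofPred_eq, mem_ballotPaths_zero, forall_mem_choices_iff, and_assoc]
    _ = historyCount (2 * n) 0 := sum_congr rfl fun w _ => ncard_setOf_forall_mem_choices w
    _ = n ! := historyCount_dyck n
end

section
/- The number a_{n,k} of fillings of the double staircase 2δ_n with k dots, such that each row contains at most one dot and each column contains at most one dot, equals (n+1)!/(n-k+1)! · C(n,k). -/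
/-!
Put the rows of `2δ_{n+1}` in order of increasing length, so that the last row, of length
`2(n+1)`, contains every column of `2δ_n`. A placement of `k+1` dots on `2δ_{n+1}` either avoids
that row, or consists of a placement of `k` dots on `2δ_n` plus one dot in one of the `2(n+1) - k`
columns of the last row left free by them. Hence `a_{n+1,k+1} = a_{n,k+1} + (2(n+1) - k) a_{n,k}`,
which holds for any Ferrers board with weakly growing rows; `(n+1)^{(k)} C(n,k)` (falling factorial)
satisfies the same recurrence because `C(n,k+1) (k+1) = C(n,k) (n-k)`.
-/

open Finset Function

theorem Set.injOn_image_iff_of_comp_eq {X Y Z W : Type*} {e : X → Y} {φ : Y → Z} {ψ : X → W}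
    {h : W → Z} (he : Injective e) (hh : Injective h) (hcomm : φ ∘ e = h ∘ ψ) (s : Set X) :
    Set.InjOn φ (e '' s) ↔ Set.InjOn ψ s := by
  rw [← he.injOn.comp_iff, hcomm]
  exact ⟨.of_comp, hh.comp_injOn⟩

section RookPlacements

variable {α β γ δ : Type*} [DecidableEq α] [DecidableEq β] [DecidableEq γ] [DecidableEq δ]

def rookPlacements (B : Finset (α × β)) (k : ℕ) : Finset (Finset (α × β)) :=
  (B.powersetCard k).filter fun s =>
    Set.InjOn Prod.fst (s : Set (α × β)) ∧ Set.InjOn Prod.snd (s : Set (α × β))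

theorem mem_rookPlacements {B s : Finset (α × β)} {k : ℕ} :
    s ∈ rookPlacements B k ↔
      s ⊆ B ∧ #s = k ∧ Set.InjOn Prod.fst (s : Set (α × β)) ∧
        Set.InjOn Prod.snd (s : Set (α × β)) := by
  simp [rookPlacements, mem_powersetCard, and_assoc]

theorem rookPlacements_zero (B : Finset (α × β)) : rookPlacements B 0 = {∅} := by
  ext s
  simp only [mem_rookPlacements, card_eq_zero, mem_singleton]
  exact ⟨fun h => h.2.1, by rintro rfl; simp⟩

theorem rookPlacements_empty (k : ℕ) :
    rookPlacements (∅ : Finset (α × β)) (k + 1) = ∅ := by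
  simp [rookPlacements]

theorem rookPlacements_map (f : α ↪ γ) (g : β ↪ δ) (B : Finset (α × β)) (k : ℕ) :
    rookPlacements (B.map (f.prodMap g)) k =
      (rookPlacements B k).map (mapEmbedding (f.prodMap g)).toEmbedding := by
  have hfst (u : Finset (α × β)) : Set.InjOn Prod.fst (u.map (f.prodMap g) : Set (γ × δ)) ↔
      Set.InjOn Prod.fst (u : Set (α × β)) := by
    rw [coe_map]
    exact Set.injOn_image_iff_of_comp_eq (f.prodMap g).injective f.injective rfl _
  have hsnd (u : Finset (α × β)) : Set.InjOn Prod.snd (u.map (f.prodMap g) : Set (γ × δ)) ↔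
      Set.InjOn Prod.snd (u : Set (α × β)) := by
    rw [coe_map]
    exact Set.injOn_image_iff_of_comp_eq (f.prodMap g).injective g.injective rfl _
  ext t
  simp only [mem_map, mem_rookPlacements, RelEmbedding.coe_toEmbedding, mapEmbedding_apply]
  constructor
  · rintro ⟨hB, hk, hrow, hcol⟩
    obtain ⟨u, huB, rfl⟩ := subset_map_iff.1 hB
    exact ⟨u, ⟨huB, by simpa using hk, (hfst u).1 hrow, (hsnd u).1 hcol⟩, rfl⟩
  · rintro ⟨u, ⟨huB, hk, hrow, hcol⟩, rfl⟩
    exact ⟨map_subset_map.2 huB, by simpa using hk, (hfst u).2 hrow, (hsnd u).2 hcol⟩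

theorem card_rookPlacements_map (f : α ↪ γ) (g : β ↪ δ) (B : Finset (α × β)) (k : ℕ) :
    #(rookPlacements (B.map (f.prodMap g)) k) = #(rookPlacements B k) := by
  rw [rookPlacements_map, card_map]

theorem insert_mem_rookPlacements_union_row {B t : Finset (α × β)} {r : α} {C : Finset β}
    {k : ℕ} {c : β} (hr : ∀ p ∈ B, p.1 ≠ r) (ht : t ∈ rookPlacements B k) (hc : c ∈ C)
    (hct : c ∉ t.image Prod.snd) :
    insert (r, c) t ∈ rookPlacements (B ∪ {r} ×ˢ C) (k + 1) := by
  obtain ⟨htB, rfl, hrow, hcol⟩ := mem_rookPlacements.1 ht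
  have hrt : (r, c) ∉ t := fun h => hr _ (htB h) rfl
  refine mem_rookPlacements.2 ⟨?_, card_insert_of_notMem hrt, ?_, ?_⟩
  · exact insert_subset (mem_union_right _ (by simp [hc])) (htB.trans subset_union_left)
  · rw [coe_insert, Set.injOn_insert (by simpa using hrt)]
    exact ⟨hrow, fun ⟨p, hp, hpr⟩ => hr p (htB hp) hpr⟩
  · rw [coe_insert, Set.injOn_insert (by simpa using hrt)]
    exact ⟨hcol, by simpa using hct⟩

theorem erase_mem_rookPlacements_of_notMem {B s : Finset (α × β)} {r : α} {C : Finset β}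
    {k : ℕ} {p : α × β} (hs : s ∈ rookPlacements (B ∪ {r} ×ˢ C) (k + 1)) (hp : p ∈ s)
    (hpB : p ∉ B) : s.erase p ∈ rookPlacements B k := by
  obtain ⟨hsB, hk, hrow, hcol⟩ := mem_rookPlacements.1 hs
  have hsub : (s.erase p : Set (α × β)) ⊆ s := coe_subset.2 (erase_subset p s)
  refine mem_rookPlacements.2 ⟨fun q hq => ?_, by rw [card_erase_of_mem hp, hk]; rfl,
    hrow.mono hsub, hcol.mono hsub⟩
  obtain ⟨hqp, hq⟩ := mem_erase.1 hq
  by_contra hqB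
  have hpr := (mem_product.1 ((mem_union.1 (hsB hp)).resolve_left hpB)).1
  have hqr := (mem_product.1 ((mem_union.1 (hsB hq)).resolve_left hqB)).1
  exact hqp (hrow hq hp (by simp_all))

theorem card_sdiff_image_snd {B t : Finset (α × β)} {C : Finset β} {k : ℕ}
    (hC : ∀ p ∈ B, p.2 ∈ C) (ht : t ∈ rookPlacements B k) :
    #(C \ t.image Prod.snd) = #C - k := by
  obtain ⟨htB, rfl, -, hcol⟩ := mem_rookPlacements.1 ht
  rw [card_sdiff_of_subset (image_subset_iff.2 fun p hp => hC p (htB hp)),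
    card_image_of_injOn hcol]

theorem card_filter_not_subset_rookPlacements_union_row {B : Finset (α × β)} {r : α}
    {C : Finset β} (hr : ∀ p ∈ B, p.1 ≠ r) (k : ℕ) :
    #((rookPlacements (B ∪ {r} ×ˢ C) (k + 1)).filter (¬ · ⊆ B)) =
      #((rookPlacements B k).sigma fun t => C \ t.image Prod.snd) := by
  refine (card_bij (fun x _ => insert (r, x.2) x.1) ?_ ?_ ?_).symm
  · rintro ⟨t, c⟩ hx
    obtain ⟨ht, hc⟩ := mem_sigma.1 hx
    refine mem_filter.2 ⟨insert_mem_rookPlacements_union_row hr ht (mem_sdiff.1 hc).1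
      (mem_sdiff.1 hc).2, fun h => hr _ (h (mem_insert_self _ _)) rfl⟩
  · rintro ⟨t, c⟩ hx ⟨t', c'⟩ hx' h
    have htB := (mem_rookPlacements.1 (mem_sigma.1 hx).1).1
    have htB' := (mem_rookPlacements.1 (mem_sigma.1 hx').1).1
    have hnot (u : Finset (α × β)) (huB : u ⊆ B) (b : β) : (r, b) ∉ u :=
      fun h => hr _ (huB h) rfl
    obtain rfl : c = c' := by
      have := h ▸ mem_insert_self (r, c) t
      simpa [hnot t' htB' c] using this
    obtain rfl : t = t' := by
      rw [← erase_insert (hnot t htB c), h, erase_insert (hnot t' htB' c)]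
    rfl
  · intro s hs
    obtain ⟨hs, hsB⟩ := mem_filter.1 hs
    obtain ⟨hsB', -, -, hcol⟩ := mem_rookPlacements.1 hs
    obtain ⟨p, hp, hpB⟩ := not_subset.1 hsB
    have hpr := mem_product.1 ((mem_union.1 (hsB' hp)).resolve_left hpB)
    refine ⟨⟨s.erase p, p.2⟩, mem_sigma.2 ⟨erase_mem_rookPlacements_of_notMem hs hp hpB,
      mem_sdiff.2 ⟨hpr.2, fun hpc => ?_⟩⟩, ?_⟩
    · obtain ⟨q, hq, hqp⟩ := mem_image.1 hpc
      exact (mem_erase.1 hq).1 (hcol (mem_erase.1 hq).2 hp hqp)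
    · rw [show (r, p.2) = p from Prod.ext (mem_singleton.1 hpr.1).symm rfl, insert_erase hp]

theorem card_rookPlacements_union_row {B : Finset (α × β)} {r : α} {C : Finset β}
    (hr : ∀ p ∈ B, p.1 ≠ r) (hC : ∀ p ∈ B, p.2 ∈ C) (k : ℕ) :
    #(rookPlacements (B ∪ {r} ×ˢ C) (k + 1)) =
      #(rookPlacements B (k + 1)) + (#C - k) * #(rookPlacements B k) := by
  set P := rookPlacements (B ∪ {r} ×ˢ C) (k + 1)
  have hAvoid : P.filter (· ⊆ B) = rookPlacements B (k + 1) := by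
    ext s
    simp only [P, mem_filter, mem_rookPlacements]
    exact ⟨fun ⟨⟨_, h⟩, hB⟩ => ⟨hB, h⟩,
      fun ⟨hB, h⟩ => ⟨⟨hB.trans subset_union_left, h⟩, hB⟩⟩
  calc #P = #(P.filter (· ⊆ B)) + #(P.filter (¬ · ⊆ B)) :=
        (card_filter_add_card_filter_not _).symm
    _ = #(rookPlacements B (k + 1)) + ∑ t ∈ rookPlacements B k, #(C \ t.image Prod.snd) := by
      rw [hAvoid, card_filter_not_subset_rookPlacements_union_row hr, card_sigma]
    _ = _ := by
      rw [sum_congr rfl fun t ht => card_sdiff_image_snd hC ht, sum_const, smul_eq_mul, mul_comm]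

end RookPlacements

section FerrersBoard

variable {α : Type*} [DecidableEq α]

def ferrersBoard (rows : Finset α) (len : α → ℕ) : Finset (α × ℕ) :=
  rows.biUnion fun i => {i} ×ˢ range (len i)

theorem mem_ferrersBoard {rows : Finset α} {len : α → ℕ} {p : α × ℕ} :
    p ∈ ferrersBoard rows len ↔ p.1 ∈ rows ∧ p.2 < len p.1 := by
  obtain ⟨i, j⟩ := p
  simp [ferrersBoard]

theorem ferrersBoard_map {γ : Type*} [DecidableEq γ] (f : α ↪ γ) (rows : Finset α)
    (len : γ → ℕ) :
    (ferrersBoard rows (len ∘ f)).map (f.prodMap (Embedding.refl ℕ)) =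
      ferrersBoard (rows.map f) len := by
  ext ⟨i, j⟩
  simp only [mem_map, mem_ferrersBoard, comp_apply, Embedding.coe_prodMap, Prod.exists,
    Prod.map_apply, Embedding.refl_apply, Prod.mk.injEq, exists_eq_right_right]
  grind

end FerrersBoard

theorem ferrersBoard_range_succ (len : ℕ → ℕ) (n : ℕ) :
    ferrersBoard (range (n + 1)) len = ferrersBoard (range n) len ∪ {n} ×ˢ range (len n) := by
  ext ⟨i, j⟩
  simp only [mem_ferrersBoard, mem_union, mem_product, mem_range, mem_singleton]
  grind

theorem card_rookPlacements_ferrersBoard_succ {len : ℕ → ℕ} (hlen : Monotone len)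
    (n k : ℕ) :
    #(rookPlacements (ferrersBoard (range (n + 1)) len) (k + 1)) =
      #(rookPlacements (ferrersBoard (range n) len) (k + 1)) +
        (len n - k) * #(rookPlacements (ferrersBoard (range n) len) k) := by
  rw [ferrersBoard_range_succ, card_rookPlacements_union_row, card_range]
  · exact fun p hp => ((mem_range.1 (mem_ferrersBoard.1 hp).1)).ne
  · intro p hp
    obtain ⟨hp1, hp2⟩ := mem_ferrersBoard.1 hp
    exact mem_range.2 (hp2.trans_le (hlen (mem_range.1 hp1).le))

theorem descFactorial_mul_choose_succ (n k : ℕ) :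
    (n + 2).descFactorial (k + 1) * (n + 1).choose (k + 1) =
      (n + 1).descFactorial (k + 1) * n.choose (k + 1) +
        (2 * (n + 1) - k) * ((n + 1).descFactorial k * n.choose k) := by
  rcases lt_or_ge n k with hnk | hkn
  · simp [Nat.choose_eq_zero_of_lt hnk, Nat.choose_eq_zero_of_lt (by omega : n < k + 1),
      Nat.choose_eq_zero_of_lt (by omega : n + 1 < k + 1)]
  · have key := Nat.choose_succ_right_eq n k
    rw [Nat.succ_descFactorial_succ, Nat.descFactorial_succ, Nat.choose_succ_succ']
    zify [hkn, (by omega : k ≤ n + 1), (by omega : k ≤ 2 * (n + 1))] at key ⊢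
    linear_combination ((n + 1).descFactorial k : ℤ) * key

theorem card_rookPlacements_doubleStaircase (n k : ℕ) :
    #(rookPlacements (ferrersBoard (range n) fun i => 2 * (i + 1)) k) =
      (n + 1).descFactorial k * n.choose k := by
  induction n generalizing k with
  | zero => cases k <;> simp [rookPlacements_zero, ferrersBoard, rookPlacements_empty]
  | succ n ih =>
    cases k with
    | zero => simp [rookPlacements_zero]
    | succ k =>
      rw [card_rookPlacements_ferrersBoard_succ (fun _ _ h => by omega), ih, ih,
        descFactorial_mul_choose_succ]

theorem factorial_div_factorial_mul_choose (n k : ℕ) :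
    (n + 1).factorial / (n - k + 1).factorial * n.choose k =
      (n + 1).descFactorial k * n.choose k := by
  rcases le_or_gt k n with hkn | hnk
  · rw [Nat.descFactorial_eq_div (by omega), Nat.sub_add_comm hkn]
  · simp [Nat.choose_eq_zero_of_lt hnk]

theorem card_partial_rook_placements_general (n k : ℕ) :
    {s : Finset (Fin n × ℕ) |
      s.card = k ∧
      (∀ p ∈ s, p.2 < 2 * ((p.1 : ℕ) + 1)) ∧
      (∀ p ∈ s, ∀ q ∈ s, p.1 = q.1 → p = q) ∧
      (∀ p ∈ s, ∀ q ∈ s, p.2 = q.2 → p = q)}.ncard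
      = Nat.factorial (n + 1) / Nat.factorial (n - k + 1) * n.choose k := by
  have hS : {s : Finset (Fin n × ℕ) |
      s.card = k ∧
      (∀ p ∈ s, p.2 < 2 * ((p.1 : ℕ) + 1)) ∧
      (∀ p ∈ s, ∀ q ∈ s, p.1 = q.1 → p = q) ∧
      (∀ p ∈ s, ∀ q ∈ s, p.2 = q.2 → p = q)} =
      ↑(rookPlacements
        (ferrersBoard (univ : Finset (Fin n)) ((fun i => 2 * (i + 1)) ∘ Fin.valEmbedding)) k) := by
    ext s
    simp only [Set.mem_ofPred_eq, mem_coe, mem_rookPlacements, subset_iff, mem_ferrersBoard,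
      mem_univ, true_and, comp_apply, Fin.valEmbedding_apply, Set.InjOn]
    exact and_left_comm
  rw [hS, Set.ncard_coe_finset, ← card_rookPlacements_map Fin.valEmbedding (Embedding.refl ℕ),
    ferrersBoard_map, Fin.map_valEmbedding_univ, Nat.Iio_eq_range,
    card_rookPlacements_doubleStaircase, factorial_div_factorial_mul_choose]

/-- The number of fillings of the double staircase `2δ_n` (rows numbered from
the top, row `i` having length `2(i+1)`) with `k` dots, no two dots in the
same row and no two in the same column, is `(n+1)!/(n-k+1)! · C(n,k)`.  A
filling is encoded as the finite set of (row, column) coordinates of the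
dots. -/
theorem card_partial_rook_placements (n k : ℕ) (hk : k ≤ n) :
    {s : Finset (Fin n × ℕ) |
      s.card = k ∧
      (∀ p ∈ s, p.2 < 2 * ((p.1 : ℕ) + 1)) ∧
      (∀ p ∈ s, ∀ q ∈ s, p.1 = q.1 → p = q) ∧
      (∀ p ∈ s, ∀ q ∈ s, p.2 = q.2 → p = q)}.ncard
      = Nat.factorial (n + 1) / Nat.factorial (n - k + 1) * n.choose k :=
  card_partial_rook_placements_general n k
end

section
/- The number of generalized stammering tableaux from ∅ to a partition λ with |λ| = k, i.e., sequences (λ^{(0)}, ..., λ^{(3n)}) of partitions with λ^{(0)} = ∅, λ^{(3n)} = λ, where for i ≡ 0,1 (mod 3) either λ^{(i)} ⋖ λ^{(i+1)} or λ^{(i)} = λ^{(i+1)}, and for i ≡ 2 (mod 3), λ^{(i)} ⋗ λ^{(i+1)}, equals (n+1)! · C(n,k) · f_λ, where f_λ is the number of standard Young tableaux of shape λ. -/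
/-- A partition, encoded by its (weakly decreasing, eventually zero) sequence
of parts. -/
def IsPartition (l : ℕ → ℕ) : Prop :=
  Antitone l ∧ ∃ N : ℕ, ∀ i : ℕ, N ≤ i → l i = 0

/-- The cover relation in Young's lattice: `ν` is obtained from `μ` by adding
one box. -/
def CoverY (μ ν : ℕ → ℕ) : Prop :=
  IsPartition μ ∧ IsPartition ν ∧
    ∃ j : ℕ, ν j = μ j + 1 ∧ ∀ i : ℕ, i ≠ j → ν i = μ i

/-- The number of standard Young tableaux of shape `lam` with `|lam| = k`:
saturated chains `∅ ⋖ ⋯ ⋖ lam` in Young's lattice. -/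
noncomputable def numSYT (k : ℕ) (lam : ℕ → ℕ) : ℕ :=
  {T : Fin (k + 1) → (ℕ → ℕ) |
    T 0 = (fun _ => 0) ∧ T (Fin.last k) = lam ∧
    ∀ i : Fin k, CoverY (T i.castSucc) (T i.succ)}.ncard

/-!
Write `G m λ` for the number of stammering chains of length `m` from `∅` to `λ` and `f_λ` for
the number of standard Young tableaux of shape `λ`. Peeling off the last step gives
`G (m+1) λ = G m λ + ∑_{μ ⋖ λ} G m μ` at a position `m ≢ 2 (mod 3)` and
`G (m+1) λ = ∑_{ν ⋗ λ} G m ν` at a position `m ≡ 2`. Together with `f_λ = ∑_{μ ⋖ λ} f_μ` and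
`∑_{ν ⋗ λ} f_ν = (|λ| + 1) f_λ` this shows inductively that `G m λ = c · C(N, |λ|) · f_λ`: up steps
act on the binomial coefficient by Pascal's rule, down steps absorb the factor `|λ| + 1`, and after
`3n` steps `c = (n+1)!` and `N = n`.

The identity `∑_{ν ⋗ λ} f_ν = (|λ| + 1) f_λ` expresses that Young's lattice is differential
(`DU = UD + I`): a partition has one more upper cover than lower covers, and two distinct
partitions have as many common upper covers as common lower covers, namely their join, resp. meet,
if it covers, resp. is covered by, both.
-/

open Finset Function
open scoped Classical

theorem sum_sum_eq_sum_card_filter_nsmul {ι κ M : Type*} [AddCommMonoid M] [DecidableEq κ]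
    {s : Finset ι} {t : ι → Finset κ} {u : Finset κ} (h : ∀ i ∈ s, t i ⊆ u) (f : κ → M) :
    ∑ i ∈ s, ∑ k ∈ t i, f k = ∑ k ∈ u, #{i ∈ s | k ∈ t i} • f k :=
  calc ∑ i ∈ s, ∑ k ∈ t i, f k = ∑ i ∈ s, ∑ k ∈ u, if k ∈ t i then f k else 0 :=
        sum_congr rfl fun i hi => by rw [sum_ite_mem, inter_eq_right.2 (h i hi)]
    _ = ∑ k ∈ u, ∑ i ∈ s, if k ∈ t i then f k else 0 := sum_comm
    _ = ∑ k ∈ u, #{i ∈ s | k ∈ t i} • f k :=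
        sum_congr rfl fun k _ => by rw [← sum_filter, sum_const]

theorem card_eq_card_of_subset_singleton {α β : Type*} {s : Finset α} {t : Finset β} {a : α}
    {b : β} (hs : s ⊆ {a}) (ht : t ⊆ {b}) (h : s.Nonempty ↔ t.Nonempty) : #s = #t := by
  rcases subset_singleton_iff.1 hs with rfl | rfl <;>
    rcases subset_singleton_iff.1 ht with rfl | rfl <;> simp_all

section Chains

variable {α : Type*} (R : ℕ → α → α → Prop) (a₀ : α)

def chains (m : ℕ) (a : α) : Set (Fin (m + 1) → α) :=
  {T | T 0 = a₀ ∧ T (Fin.last m) = a ∧ ∀ i : Fin m, R i (T i.castSucc) (T i.succ)}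

variable {R a₀}

theorem chains_zero_self : chains R a₀ 0 a₀ = {fun _ => a₀} := by
  ext T
  simp only [chains, Set.mem_ofPred_eq, Set.mem_singleton_iff, IsEmpty.forall_iff, and_true,
    Fin.last_zero, and_self, funext_iff]
  exact ⟨fun h x => Fin.fin_one_eq_zero x ▸ h, fun h => h 0⟩

theorem chains_zero_of_ne {a : α} (h : a ≠ a₀) : chains R a₀ 0 a = ∅ :=
  Set.eq_empty_of_forall_notMem fun _ hT => h (hT.2.1.symm.trans hT.1)

theorem forall_apply_of_mem_chains (P : α → Prop) (h₀ : P a₀)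
    (hR : ∀ i b c, R i b c → P b → P c) {m : ℕ} {a : α} {T : Fin (m + 1) → α}
    (hT : T ∈ chains R a₀ m a) (i : Fin (m + 1)) : P (T i) := by
  induction i using Fin.induction with
  | zero => exact hT.1 ▸ h₀
  | succ i ih => exact hR i _ _ (hT.2.2 i) ih

theorem rel_penultimate_of_mem_chains {m : ℕ} {a : α} {T : Fin (m + 2) → α}
    (hT : T ∈ chains R a₀ (m + 1) a) : R m (T (Fin.last m).castSucc) a := by
  simpa only [Fin.succ_last, Fin.val_last, hT.2.1] using hT.2.2 (Fin.last m)

theorem init_mem_chains {m : ℕ} {a : α} {T : Fin (m + 2) → α}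
    (hT : T ∈ chains R a₀ (m + 1) a) : Fin.init T ∈ chains R a₀ m (T (Fin.last m).castSucc) :=
  ⟨hT.1, rfl, fun i => by
    simpa only [Fin.init, Fin.succ_castSucc, Fin.val_castSucc] using hT.2.2 i.castSucc⟩

theorem snoc_mem_chains {m : ℕ} {μ a : α} {T : Fin (m + 1) → α} (hT : T ∈ chains R a₀ m μ)
    (h : R m μ a) : Fin.snoc (α := fun _ => α) T a ∈ chains R a₀ (m + 1) a := by
  refine ⟨?_, Fin.snoc_last _ _, Fin.lastCases ?_ fun i => ?_⟩
  · rw [← Fin.castSucc_zero, Fin.snoc_castSucc, hT.1]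
  · rwa [Fin.snoc_castSucc, Fin.succ_last, Fin.snoc_last, hT.2.1]
  · rw [Fin.snoc_castSucc, Fin.succ_castSucc, Fin.snoc_castSucc]
    exact hT.2.2 i

def chainsSuccEquiv (m : ℕ) (a : α) :
    chains R a₀ (m + 1) a ≃ Σ μ : {μ // R m μ a}, chains R a₀ m μ :=
  let penultimate : chains R a₀ (m + 1) a → {μ // R m μ a} := fun T =>
    ⟨T.1 (Fin.last m).castSucc, rel_penultimate_of_mem_chains T.2⟩
  (Equiv.sigmaFiberEquiv penultimate).symm.trans <| Equiv.sigmaCongrRight fun μ =>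
    { toFun := fun T => ⟨Fin.init T.1.1, congrArg Subtype.val T.2 ▸ init_mem_chains T.1.2⟩
      invFun := fun T => ⟨⟨_, snoc_mem_chains T.2 μ.2⟩,
        Subtype.ext <| (Fin.snoc_castSucc (α := fun _ => α) _ _ _).trans T.2.2.1⟩
      left_inv := fun T => by
        ext : 2
        change Fin.snoc (α := fun _ => α) (Fin.init T.1.1) a = T.1.1
        conv_rhs => rw [← Fin.snoc_init_self T.1.1, T.1.2.2.1]
      right_inv := fun T => Subtype.ext (Fin.init_snoc (α := fun _ => α) _ _) }

theorem finite_chains (hR : ∀ i a, {μ | R i μ a}.Finite) (m : ℕ) (a : α) :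
    (chains R a₀ m a).Finite := by
  induction m generalizing a with
  | zero =>
    by_cases h : a = a₀
    · simp [h, chains_zero_self]
    · simp [chains_zero_of_ne h]
  | succ m ih =>
    have : Finite {μ // R m μ a} := (hR m a).to_subtype
    have := fun μ => (ih μ).to_subtype
    exact Set.finite_coe_iff.1 (Finite.of_equiv _ (chainsSuccEquiv m a).symm)

theorem ncard_chains_succ (hR : ∀ i a, {μ | R i μ a}.Finite) {m : ℕ} {a : α} (S : Finset α)
    (hS : ∀ μ, μ ∈ S ↔ R m μ a) :
    (chains R a₀ (m + 1) a).ncard = ∑ μ ∈ S, (chains R a₀ m μ).ncard := by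
  let := Fintype.subtype S hS
  have := fun μ => (finite_chains (a₀ := a₀) hR m μ).to_subtype
  rw [← Nat.card_coe_set_eq, Nat.card_congr (chainsSuccEquiv m a), Nat.card_sigma,
    Finset.sum_subtype S hS]
  rfl

end Chains

section YoungLattice

variable {l κ μ ν : ℕ → ℕ}

theorem isPartition_zero : IsPartition (fun _ => 0) :=
  ⟨antitone_const, 0, fun _ _ => rfl⟩

theorem IsPartition.finite_support (hl : IsPartition l) : (support l).Finite := by
  obtain ⟨N, hN⟩ := hl.2
  exact (Set.finite_Iio N).subset fun i hi => not_le.1 fun h => hi (hN i h)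

theorem IsPartition.inf (hl : IsPartition l) (hκ : IsPartition κ) : IsPartition (l ⊓ κ) := by
  obtain ⟨N, hN⟩ := hl.2
  exact ⟨hl.1.inf hκ.1, N, fun i hi => by simp [hN i hi]⟩

theorem IsPartition.sup (hl : IsPartition l) (hκ : IsPartition κ) : IsPartition (l ⊔ κ) := by
  obtain ⟨N, hN⟩ := hl.2
  obtain ⟨M, hM⟩ := hκ.2
  exact ⟨hl.1.sup hκ.1, max N M, fun i hi => by
    simp [hN i (le_of_max_le_left hi), hM i (le_of_max_le_right hi)]⟩

theorem IsPartition.update (hl : IsPartition l) {j x : ℕ} (h₁ : l (j + 1) ≤ x)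
    (h₂ : ∀ i, j = i + 1 → x ≤ l i) : IsPartition (update l j x) := by
  obtain ⟨N, hN⟩ := hl.2
  refine ⟨antitone_nat_of_succ_le fun i => ?_, max N (j + 1), fun i hi => ?_⟩
  · by_cases hij : i = j
    · subst hij
      simpa [update_of_ne (Nat.succ_ne_self i)] using h₁
    by_cases hij' : i + 1 = j
    · subst hij'
      simpa [update_of_ne hij] using h₂ i rfl
    simpa [update_of_ne hij, update_of_ne hij'] using hl.1 (Nat.le_succ i)
  · rw [update_of_ne (by omega), hN i (le_of_max_le_left hi)]

theorem coverY_iff_update :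
    CoverY μ ν ↔ IsPartition μ ∧ IsPartition ν ∧ ∃ j, update μ j (μ j + 1) = ν := by
  refine and_congr_right fun _ => and_congr_right fun _ => exists_congr fun j =>
    ⟨fun ⟨hj, hi⟩ => funext fun i => ?_, fun h => h ▸ ⟨update_self .., fun i hi => ?_⟩⟩
  · by_cases hij : i = j
    · subst hij; simp [hj]
    · simp [update_of_ne hij, hi i hij]
  · exact update_of_ne hi ..

theorem CoverY.ne (h : CoverY μ ν) : μ ≠ ν := by
  obtain ⟨-, -, j, hj, -⟩ := h
  rintro rfl
  omega

theorem CoverY.ne_zero (h : CoverY μ ν) : ν ≠ fun _ => 0 := by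
  obtain ⟨-, -, j, hj, -⟩ := h
  rintro rfl
  exact absurd hj (by simp)

theorem CoverY.finsum_eq (h : CoverY μ ν) : ∑ᶠ i, ν i = ∑ᶠ i, μ i + 1 := by
  obtain ⟨hμ, -, j, hj, hj'⟩ := h
  have hν : ν = fun i => μ i + (Pi.single j 1 : ℕ → ℕ) i := funext fun i => by
    by_cases hij : i = j
    · subst hij; simp [hj]
    · simp [hj' i hij, Pi.single_eq_of_ne hij]
  rw [hν, finsum_add_distrib hμ.finite_support
      ((Set.finite_singleton j).subset Pi.support_single_subset),
    finsum_eq_single (fun i => (Pi.single j 1 : ℕ → ℕ) i) j fun i hi => Pi.single_eq_of_ne hi _,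
    Pi.single_eq_same]

def removableRows (l : ℕ → ℕ) : Set ℕ := {j | l (j + 1) < l j}

def addableRows (l : ℕ → ℕ) : Set ℕ := insert 0 ((· + 1) '' removableRows l)

theorem IsPartition.finite_removableRows (hl : IsPartition l) : (removableRows l).Finite :=
  hl.finite_support.subset fun j (hj : l (j + 1) < l j) => by
    rw [mem_support]
    omega

theorem coverY_iff_exists_addableRows (hl : IsPartition l) :
    CoverY l ν ↔ ∃ j ∈ addableRows l, update l j (l j + 1) = ν := by
  rw [coverY_iff_update]
  constructor
  · rintro ⟨-, hν, j, rfl⟩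
    refine ⟨j, ?_, rfl⟩
    rcases j with _ | d
    · exact Set.mem_insert _ _
    · refine Set.mem_insert_of_mem _ ⟨d, ?_, rfl⟩
      have := hν.1 (Nat.le_succ d)
      simp only [update_self, update_of_ne (Nat.succ_ne_self d).symm] at this
      exact this
  · rintro ⟨j, hj, rfl⟩
    refine ⟨hl, hl.update (Nat.le_succ_of_le (hl.1 (Nat.le_succ j))) ?_, j, rfl⟩
    rintro i rfl
    obtain h | ⟨d, hd, hdi⟩ := hj
    · omega
    · obtain rfl : d = i := Nat.succ_injective hdi
      exact hd

theorem coverY_iff_exists_removableRows (hl : IsPartition l) :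
    CoverY μ l ↔ ∃ j ∈ removableRows l, update l j (l j - 1) = μ := by
  rw [coverY_iff_update]
  constructor
  · rintro ⟨hμ, -, j, rfl⟩
    refine ⟨j, ?_, by simp⟩
    have := hμ.1 (Nat.le_succ j)
    simp only [removableRows, Set.mem_ofPred_eq, update_self,
      update_of_ne (Nat.succ_ne_self j)]
    omega
  · rintro ⟨j, hj, rfl⟩
    have hj' : l (j + 1) < l j := hj
    refine ⟨hl.update (by omega) fun i hi => (Nat.sub_le _ _).trans (hl.1 (by omega)), hl, j,
      ?_⟩
    rw [update_idem, update_self, Nat.sub_add_cancel (by omega), update_eq_self]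

theorem setOf_coverY_left_eq_image (hl : IsPartition l) :
    {ν | CoverY l ν} = (fun j => update l j (l j + 1)) '' addableRows l :=
  Set.ext fun _ => coverY_iff_exists_addableRows hl

theorem setOf_coverY_right_eq_image (hl : IsPartition l) :
    {μ | CoverY μ l} = (fun j => update l j (l j - 1)) '' removableRows l :=
  Set.ext fun _ => coverY_iff_exists_removableRows hl

theorem finite_setOf_coverY_left (μ : ℕ → ℕ) : {ν | CoverY μ ν}.Finite := by
  by_cases hμ : IsPartition μ
  · rw [setOf_coverY_left_eq_image hμ]
    exact ((hμ.finite_removableRows.image _).insert 0).image _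
  · exact Set.finite_empty.subset fun ν h => hμ h.1

theorem finite_setOf_coverY_right (ν : ℕ → ℕ) : {μ | CoverY μ ν}.Finite := by
  by_cases hν : IsPartition ν
  · rw [setOf_coverY_right_eq_image hν]
    exact hν.finite_removableRows.image _
  · exact Set.finite_empty.subset fun μ h => hν h.2.1

noncomputable def upperCovers (μ : ℕ → ℕ) : Finset (ℕ → ℕ) :=
  (finite_setOf_coverY_left μ).toFinset

noncomputable def lowerCovers (ν : ℕ → ℕ) : Finset (ℕ → ℕ) :=
  (finite_setOf_coverY_right ν).toFinset

@[simp]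
theorem mem_upperCovers : ν ∈ upperCovers μ ↔ CoverY μ ν :=
  Set.Finite.mem_toFinset _

@[simp]
theorem mem_lowerCovers : μ ∈ lowerCovers ν ↔ CoverY μ ν :=
  Set.Finite.mem_toFinset _

theorem card_upperCovers (hl : IsPartition l) : #(upperCovers l) = #(lowerCovers l) + 1 := by
  have hadd : Injective fun j => update l j (l j + 1) := fun j j' h => by
    by_contra hne
    simpa [update_of_ne hne] using congrFun h j
  have hrem : Set.InjOn (fun j => update l j (l j - 1)) (removableRows l) :=
    fun j (hj : l (j + 1) < l j) j' _ h => by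
      by_contra hne
      have := congrFun h j
      simp only [update_self, update_of_ne hne] at this
      omega
  rw [← Set.ncard_coe_finset, ← Set.ncard_coe_finset, upperCovers, lowerCovers,
    Set.Finite.coe_toFinset, Set.Finite.coe_toFinset, setOf_coverY_left_eq_image hl,
    setOf_coverY_right_eq_image hl,
    Set.ncard_image_of_injective _ hadd, hrem.ncard_image, addableRows,
    Set.ncard_insert_of_notMem (by simp) (hl.finite_removableRows.image _),
    Set.ncard_image_of_injective _ (add_left_injective 1)]

theorem CoverY.coverY_inf (h₁ : CoverY l ν) (h₂ : CoverY κ ν) (hne : l ≠ κ) :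
    CoverY (l ⊓ κ) l := by
  obtain ⟨hl, -, p, hp, hp'⟩ := h₁
  obtain ⟨hκ, -, q, hq, hq'⟩ := h₂
  have hpq : p ≠ q := by
    rintro rfl
    exact hne (funext fun i => by by_cases hi : i = p <;> grind)
  refine ⟨hl.inf hκ, hl, q, ?_, fun i hi => ?_⟩ <;> simp only [Pi.inf_apply]
  · grind
  · by_cases hip : i = p <;> grind

theorem CoverY.eq_sup (h₁ : CoverY l ν) (h₂ : CoverY κ ν) (hne : l ≠ κ) : ν = l ⊔ κ := by
  obtain ⟨-, -, p, hp, hp'⟩ := h₁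
  obtain ⟨-, -, q, hq, hq'⟩ := h₂
  have hpq : p ≠ q := by
    rintro rfl
    exact hne (funext fun i => by by_cases hi : i = p <;> grind)
  funext i
  simp only [Pi.sup_apply]
  by_cases hip : i = p <;> by_cases hiq : i = q <;> grind

theorem CoverY.coverY_sup (h₁ : CoverY μ l) (h₂ : CoverY μ κ) (hne : l ≠ κ) :
    CoverY l (l ⊔ κ) := by
  obtain ⟨-, hl, p, hp, hp'⟩ := h₁
  obtain ⟨-, hκ, q, hq, hq'⟩ := h₂
  have hpq : p ≠ q := by
    rintro rfl
    exact hne (funext fun i => by by_cases hi : i = p <;> grind)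
  refine ⟨hl, hl.sup hκ, q, ?_, fun i hi => ?_⟩ <;> simp only [Pi.sup_apply]
  · grind
  · by_cases hip : i = p <;> grind

theorem CoverY.eq_inf (h₁ : CoverY μ l) (h₂ : CoverY μ κ) (hne : l ≠ κ) : μ = l ⊓ κ := by
  obtain ⟨-, -, p, hp, hp'⟩ := h₁
  obtain ⟨-, -, q, hq, hq'⟩ := h₂
  have hpq : p ≠ q := by
    rintro rfl
    exact hne (funext fun i => by by_cases hi : i = p <;> grind)
  funext i
  simp only [Pi.inf_apply]
  by_cases hip : i = p <;> by_cases hiq : i = q <;> grind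

theorem card_filter_upperCovers_eq (hne : l ≠ κ) :
    #{ν ∈ upperCovers l | CoverY κ ν} = #{μ ∈ lowerCovers l | CoverY μ κ} := by
  refine card_eq_card_of_subset_singleton (a := l ⊔ κ) (b := l ⊓ κ) (fun ν hν => ?_)
    (fun μ hμ => ?_) ⟨fun ⟨ν, hν⟩ => ⟨l ⊓ κ, ?_⟩, fun ⟨μ, hμ⟩ => ⟨l ⊔ κ, ?_⟩⟩
  all_goals simp only [mem_filter, mem_upperCovers, mem_lowerCovers, mem_singleton] at *
  · exact hν.1.eq_sup hν.2 hne
  · exact hμ.1.eq_inf hμ.2 hne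
  · exact ⟨hν.1.coverY_inf hν.2 hne, inf_comm l κ ▸ hν.2.coverY_inf hν.1 hne.symm⟩
  · exact ⟨hμ.1.coverY_sup hμ.2 hne, sup_comm l κ ▸ hμ.2.coverY_sup hμ.1 hne.symm⟩

theorem sum_upperCovers_sum_lowerCovers {M : Type*} [AddCommMonoid M] (hl : IsPartition l)
    (g : (ℕ → ℕ) → M) :
    ∑ ν ∈ upperCovers l, ∑ κ ∈ lowerCovers ν, g κ
      = ∑ μ ∈ lowerCovers l, ∑ κ ∈ upperCovers μ, g κ + g l := by
  set W := (upperCovers l).biUnion lowerCovers ∪ (lowerCovers l).biUnion upperCovers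
  have hlW : l ∈ W := by
    have hcov : CoverY l (update l 0 (l 0 + 1)) :=
      (coverY_iff_exists_addableRows hl).2 ⟨0, Set.mem_insert _ _, rfl⟩
    exact mem_union_left _ (mem_biUnion.2 ⟨_, mem_upperCovers.2 hcov, mem_lowerCovers.2 hcov⟩)
  have hcount : ∀ κ, #{ν ∈ upperCovers l | κ ∈ lowerCovers ν}
      = #{μ ∈ lowerCovers l | κ ∈ upperCovers μ} + if κ = l then 1 else 0 := by
    intro κ
    simp only [mem_lowerCovers, mem_upperCovers]
    split_ifs with h
    · subst h
      rw [filter_true_of_mem fun _ => mem_upperCovers.1,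
        filter_true_of_mem fun _ => mem_lowerCovers.1, card_upperCovers hl]
    · rw [card_filter_upperCovers_eq (Ne.symm h), add_zero]
  rw [sum_sum_eq_sum_card_filter_nsmul (u := W)
      fun ν hν => (subset_biUnion_of_mem lowerCovers hν).trans subset_union_left,
    sum_sum_eq_sum_card_filter_nsmul (u := W)
      fun μ hμ => (subset_biUnion_of_mem upperCovers hμ).trans subset_union_right]
  simp_rw [hcount, add_smul, sum_add_distrib, ite_smul, one_smul, zero_smul, sum_ite_eq',
    if_pos hlW]

end YoungLattice

section StandardTableaux

variable {l : ℕ → ℕ}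

theorem numSYT_eq_ncard_chains (k : ℕ) (l : ℕ → ℕ) :
    numSYT k l = (chains (fun _ => CoverY) (fun _ => 0) k l).ncard :=
  rfl

theorem numSYT_zero_zero : numSYT 0 (fun _ => 0) = 1 := by
  rw [numSYT_eq_ncard_chains, chains_zero_self, Set.ncard_singleton]

theorem numSYT_zero_of_ne (h : l ≠ fun _ => 0) : numSYT 0 l = 0 := by
  rw [numSYT_eq_ncard_chains, chains_zero_of_ne h, Set.ncard_empty]

theorem numSYT_succ (k : ℕ) (l : ℕ → ℕ) :
    numSYT (k + 1) l = ∑ μ ∈ lowerCovers l, numSYT k μ :=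
  ncard_chains_succ (fun _ => finite_setOf_coverY_right) _ fun _ => mem_lowerCovers

theorem sum_upperCovers_numSYT (hl : IsPartition l) (k : ℕ) :
    ∑ ν ∈ upperCovers l, numSYT (k + 1) ν = (k + 1) * numSYT k l := by
  induction k generalizing l with
  | zero =>
    simp_rw [numSYT_succ 0, sum_upperCovers_sum_lowerCovers hl]
    rw [sum_eq_zero fun μ _ => sum_eq_zero fun κ hκ =>
      numSYT_zero_of_ne (mem_upperCovers.1 hκ).ne_zero, zero_add, zero_add, one_mul]
  | succ k ih =>
    rw [sum_congr rfl fun ν _ => numSYT_succ (k + 1) ν, sum_upperCovers_sum_lowerCovers hl,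
      sum_congr rfl fun μ hμ => ih (mem_lowerCovers.1 hμ).1, ← mul_sum, ← numSYT_succ]
    ring

end StandardTableaux

section Stammering

def stammerStep (i : ℕ) (μ ν : ℕ → ℕ) : Prop :=
  if i % 3 = 2 then CoverY ν μ else CoverY μ ν ∨ μ = ν

noncomputable def numStammering (m : ℕ) (l : ℕ → ℕ) : ℕ :=
  (chains stammerStep (fun _ => 0) m l).ncard

variable {m : ℕ}

theorem IsPartition.of_stammerStep {i : ℕ} {μ ν : ℕ → ℕ} (h : stammerStep i μ ν)
    (hμ : IsPartition μ) : IsPartition ν := by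
  unfold stammerStep at h
  split_ifs at h
  · exact h.1
  · rcases h with h | rfl
    exacts [h.2.1, hμ]

theorem finite_setOf_stammerStep (i : ℕ) (ν : ℕ → ℕ) : {μ | stammerStep i μ ν}.Finite := by
  unfold stammerStep
  split_ifs
  · exact finite_setOf_coverY_left ν
  · exact (finite_setOf_coverY_right ν).union (Set.finite_singleton ν)

theorem numStammering_succ_of_mod_eq (hm : m % 3 = 2) (l : ℕ → ℕ) :
    numStammering (m + 1) l = ∑ ν ∈ upperCovers l, numStammering m ν :=
  ncard_chains_succ finite_setOf_stammerStep _ fun ν => by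
    rw [mem_upperCovers, stammerStep, if_pos hm]

theorem numStammering_succ_of_mod_ne (hm : m % 3 ≠ 2) (l : ℕ → ℕ) :
    numStammering (m + 1) l = numStammering m l + ∑ μ ∈ lowerCovers l, numStammering m μ := by
  rw [numStammering, ncard_chains_succ finite_setOf_stammerStep (insert l (lowerCovers l))
      fun μ => by rw [mem_insert, mem_lowerCovers, stammerStep, if_neg hm, or_comm, eq_comm],
    sum_insert fun h => (mem_lowerCovers.1 h).ne rfl]
  rfl

def StammeringFormula (m c N : ℕ) : Prop :=
  ∀ l, IsPartition l → numStammering m l = c * N.choose (∑ᶠ i, l i) * numSYT (∑ᶠ i, l i) l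

theorem stammeringFormula_zero : StammeringFormula 0 1 0 := by
  intro l hl
  by_cases h : l = fun _ => 0
  · subst h
    rw [numStammering, chains_zero_self, Set.ncard_singleton, finsum_zero, numSYT_zero_zero]
    rfl
  rw [numStammering, chains_zero_of_ne h, Set.ncard_empty]
  rcases Nat.eq_zero_or_pos (∑ᶠ i, l i) with h0 | hpos
  · rw [h0, numSYT_zero_of_ne h, mul_zero]
  · rw [Nat.choose_eq_zero_of_lt hpos, mul_zero, zero_mul]

theorem StammeringFormula.succ_of_mod_ne {c N : ℕ} (H : StammeringFormula m c N)
    (hm : m % 3 ≠ 2) : StammeringFormula (m + 1) c (N + 1) := by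
  intro l hl
  rw [numStammering_succ_of_mod_ne hm, H l hl]
  rcases hk : ∑ᶠ i, l i with _ | k
  · rw [sum_eq_zero fun μ hμ => absurd (mem_lowerCovers.1 hμ).finsum_eq (by omega)]
    simp
  · have hμ : ∀ μ ∈ lowerCovers l, numStammering m μ = c * N.choose k * numSYT k μ :=
      fun μ hμ => by
        have hμl := mem_lowerCovers.1 hμ
        rw [H μ hμl.1, show ∑ᶠ i, μ i = k by have := hμl.finsum_eq; omega]
    rw [sum_congr rfl hμ, ← mul_sum, ← numSYT_succ, Nat.choose_succ_succ']
    ring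

theorem StammeringFormula.succ_of_mod_eq {c N : ℕ} (H : StammeringFormula m c (N + 1))
    (hm : m % 3 = 2) : StammeringFormula (m + 1) (c * (N + 1)) N := by
  intro l hl
  set k := ∑ᶠ i, l i
  have hν : ∀ ν ∈ upperCovers l,
      numStammering m ν = c * (N + 1).choose (k + 1) * numSYT (k + 1) ν := fun ν hν => by
    have hlν := mem_upperCovers.1 hν
    rw [H ν hlν.2.1, hlν.finsum_eq]
  rw [numStammering_succ_of_mod_eq hm, sum_congr rfl hν, ← mul_sum, sum_upperCovers_numSYT hl]
  calc _ = c * ((N + 1).choose (k + 1) * (k + 1)) * numSYT k l := by ring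
    _ = _ := by rw [← Nat.add_one_mul_choose_eq]; ring

theorem stammeringFormula_three_mul (n : ℕ) :
    StammeringFormula (3 * n) (n + 1).factorial n := by
  induction n with
  | zero => exact stammeringFormula_zero
  | succ n ih =>
    rw [show 3 * (n + 1) = 3 * n + 1 + 1 + 1 by ring, Nat.factorial_succ, mul_comm (n + 1 + 1)]
    exact ((ih.succ_of_mod_ne (by omega)).succ_of_mod_ne (by omega)).succ_of_mod_eq (by omega)

end Stammering

/-- The number of generalized stammering tableaux of size `n` from `∅` to a
partition `lam` with `|lam| = k`: sequences `(λ⁽⁰⁾, …, λ⁽³ⁿ⁾)` of partitions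
with `λ⁽⁰⁾ = ∅`, `λ⁽³ⁿ⁾ = lam`, where for `i ≡ 0, 1 (mod 3)` either
`λ⁽ⁱ⁾ ⋖ λ⁽ⁱ⁺¹⁾` or `λ⁽ⁱ⁾ = λ⁽ⁱ⁺¹⁾`, and for `i ≡ 2 (mod 3)` one has
`λ⁽ⁱ⁾ ⋗ λ⁽ⁱ⁺¹⁾`, equals `(n+1)! · C(n,k) · f_lam`. -/
theorem card_generalized_stammering_tableaux (n k : ℕ) (lam : ℕ → ℕ)
    (hlam : IsPartition lam) (hsize : ∑ᶠ i, lam i = k) :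
    {L : Fin (3 * n + 1) → (ℕ → ℕ) |
      (∀ i, IsPartition (L i)) ∧
      L 0 = (fun _ => 0) ∧
      L (Fin.last (3 * n)) = lam ∧
      ∀ i : ℕ, (h : i < 3 * n) →
        (if i % 3 = 2 then
          CoverY (L ⟨i + 1, by omega⟩) (L ⟨i, by omega⟩)
        else
          CoverY (L ⟨i, by omega⟩) (L ⟨i + 1, by omega⟩) ∨
            L ⟨i, by omega⟩ = L ⟨i + 1, by omega⟩)}.ncard
      = Nat.factorial (n + 1) * n.choose k * numSYT k lam := by
  rw [← hsize, ← stammeringFormula_three_mul n lam hlam, numStammering]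
  congr 1
  ext L
  exact ⟨fun ⟨_, h₀, hlast, hstep⟩ => ⟨h₀, hlast, fun i => hstep i i.2⟩,
    fun hL => ⟨forall_apply_of_mem_chains IsPartition isPartition_zero
      (fun _ _ _ => IsPartition.of_stammerStep) hL, hL.1, hL.2.1, fun i hi => hL.2.2 ⟨i, hi⟩⟩⟩
end
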